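/- arXiv:1207.4969 — 5 statements merged into one kernel-verified Lean document; each statement's English description precedes it below -/
import Mathlib

section
/- Let Q ∈ F_q[x] be monic irreducible and 𝔇 = deg Q − 1. Then (1/φ(Q)) · Σ_{χ ≠ χ₀ mod Q} L(1/2,χ) = 1 + O(q^{−𝔇/2}), with an implied constant depending only on q. -/
/-!
Dirichlet characters modulo `Q` are the multiplicative characters of `F[X]/(Q)`. By orthogonality,
`∑_χ χ(N)` vanishes unless `N ≡ 1 mod Q`, and a monic `N` of degree `< deg Q` is `≡ 1` only for
`N = 1`; hence `∑_χ L(1/2, χ) = φ(Q)` exactly, over all characters. Removing the trivial character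
leaves the error `-L(1/2, χ₀) / φ(Q)`, where `|L(1/2, χ₀)| ≤ ∑_{n ≤ 𝔇} q^{n/2}` (at most `q^n` monic
polynomials of degree `n`) and `φ(Q) = q^{𝔇+1} - 1`, which gives `C = 1 / (√q (√q - 1))`.
-/

open Polynomial

noncomputable section

variable {F : Type*}

/-- A Dirichlet character modulo `Q` over the polynomial ring. -/
def IsDirichletChar [CommRing F] (Q : Polynomial F) (χ : Polynomial F → ℂ) : Prop :=
  (∀ A B : Polynomial F, χ (A + B * Q) = χ A) ∧
  (∀ A B : Polynomial F, χ (A * B) = χ A * χ B) ∧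
  (∀ A : Polynomial F, χ A ≠ 0 ↔ IsCoprime A Q)

/-- The trivial character modulo `Q`. -/
def trivialChar [CommRing F] (Q : Polynomial F) : Polynomial F → ℂ :=
  fun A => @ite ℂ (IsCoprime A Q) (Classical.propDecidable _) 1 0

/-- Euler's totient: the number of residue classes modulo `Q` coprime to `Q`. -/
def polyPhi [Field F] (Q : Polynomial F) : ℕ :=
  Nat.card ((Polynomial F ⧸ Ideal.span {Q}))ˣ

/-- The central value `L(1/2,χ)` as a finite sum over monic polynomials of degree `≤ 𝔇`. -/
def Lhalf [Field F] (q 𝔇 : ℕ) (χ : Polynomial F → ℂ) : ℂ :=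
  ∑ᶠ N ∈ {N : Polynomial F | N.Monic ∧ N.natDegree ≤ 𝔇},
    χ N / (Real.sqrt ((q : ℝ) ^ N.natDegree) : ℂ)

theorem Real.sqrt_pow_eq_pow_sqrt {x : ℝ} (hx : 0 ≤ x) (n : ℕ) : √(x ^ n) = √x ^ n := by
  rw [← Real.sqrt_sq (pow_nonneg (Real.sqrt_nonneg x) n), ← pow_mul, mul_comm, pow_mul,
    Real.sq_sqrt hx]

theorem geom_sum_div_sq_pow_sub_one_le {r : ℝ} (hr : 1 < r) (D : ℕ) :
    (∑ n ∈ Finset.range (D + 1), r ^ n) / ((r ^ 2) ^ (D + 1) - 1) ≤ 1 / (r * (r - 1)) / r ^ D := by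
  have hr1 : 0 < r - 1 := sub_pos.mpr hr
  have hx : 1 < r ^ D * r := pow_succ r D ▸ one_lt_pow₀ hr D.succ_ne_zero
  -- `(r²)^(D+1) - 1 = (r^(D+1) - 1)(r^(D+1) + 1)`, so the quotient is `1 / ((r - 1)(r^(D+1) + 1))`.
  rw [geom_sum_eq hr.ne', ← pow_mul, mul_comm, pow_mul, div_div, div_div, pow_succ,
    div_le_div_iff₀ (mul_pos hr1 (by nlinarith)) (by positivity)]
  nlinarith [mul_pos hr1 (sub_pos.mpr hx)]

open Classical in
theorem MulChar.finsum_apply_eq_ite {M R : Type*} [CommMonoid M] [Finite M] [CommRing R]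
    [IsDomain R] [HasEnoughRootsOfUnity R (Monoid.exponent Mˣ)] (a : M) :
    ∑ᶠ ψ : MulChar M R, ψ a = if a = 1 then (Nat.card Mˣ : R) else 0 := by
  have : Fintype (MulChar M R) := Fintype.ofFinite _
  rw [finsum_eq_sum_of_fintype]
  split_ifs with ha
  · simp only [ha, map_one, Finset.sum_const, Finset.card_univ, nsmul_eq_mul, mul_one,
      ← Nat.card_eq_fintype_card, MulChar.card_eq_card_units_of_hasEnoughRootsOfUnity]
  · obtain ⟨ψ, hψ⟩ := MulChar.exists_apply_ne_one_of_hasEnoughRootsOfUnity M R ha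
    refine eq_zero_of_mul_eq_self_left hψ ?_
    simp only [Finset.mul_sum, ← MulChar.mul_apply]
    exact Fintype.sum_bijective _ (Group.mulLeft_bijective ψ) _ _ fun _ ↦ rfl

namespace AdjoinRoot

theorem isUnit_mk_iff_isCoprime {R : Type*} [CommRing R] {f A : R[X]} :
    IsUnit (mk f A) ↔ IsCoprime A f := by
  simp only [isUnit_iff_exists_inv, IsCoprime]
  constructor
  · rintro ⟨b, hb⟩
    obtain ⟨B, rfl⟩ := mk_surjective b
    obtain ⟨C, hC⟩ := mk_eq_mk.mp (by rw [map_mul, hb, map_one] : mk f (A * B) = mk f 1)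
    exact ⟨B, -C, by linear_combination hC⟩
  · rintro ⟨B, C, h⟩
    refine ⟨mk f B, ?_⟩
    rw [← map_mul, ← map_one (mk f), mk_eq_mk]
    exact ⟨-C, by linear_combination h⟩

theorem mk_eq_one_iff_of_natDegree_lt {R : Type*} [CommRing R] [IsDomain R] {f A : R[X]}
    (hA : A.natDegree < f.natDegree) : mk f A = 1 ↔ A = 1 := by
  refine ⟨fun h ↦ ?_, fun h ↦ h ▸ map_one _⟩
  rw [← map_one (mk f), mk_eq_mk] at h
  by_contra hA1
  have hle := natDegree_le_of_dvd h (sub_ne_zero.mpr hA1)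
  have := natDegree_sub_le A 1
  rw [natDegree_one] at this
  omega

theorem natCard_eq_pow_natDegree {K : Type*} [Field K] [Finite K] {f : K[X]} (hf : f ≠ 0) :
    Nat.card (AdjoinRoot f) = Nat.card K ^ f.natDegree := by
  have := (powerBasis hf).finite
  rw [Module.natCard_eq_pow_finrank (K := K), (powerBasis hf).finrank, powerBasis_dim]

theorem finite_of_ne_zero {K : Type*} [Field K] [Finite K] {f : K[X]} (hf : f ≠ 0) :
    Finite (AdjoinRoot f) :=
  have := (powerBasis hf).finite
  Module.finite_of_finite K

end AdjoinRoot

namespace Polynomial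

variable {R : Type*} [Semiring R]

theorem finite_setOf_natDegree_le [Finite R] (D : ℕ) : {p : R[X] | p.natDegree ≤ D}.Finite := by
  have : Finite (degreeLT R (D + 1)) := .of_equiv _ (degreeLTEquiv R (D + 1)).toEquiv.symm
  refine (Set.toFinite (degreeLT R (D + 1) : Set R[X])).subset fun p hp ↦ ?_
  rw [SetLike.mem_coe, mem_degreeLT]
  exact (degree_le_of_natDegree_le hp).trans_lt (WithBot.coe_lt_coe.mpr D.lt_succ_self)

theorem card_le_of_forall_monic_natDegree_eq [Fintype R] {n : ℕ} {s : Finset R[X]}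
    (hs : ∀ p ∈ s, p.Monic ∧ p.natDegree = n) : s.card ≤ Fintype.card R ^ n := by
  classical
  rw [← Fintype.card_fin n, ← Fintype.card_fun, ← Finset.card_univ]
  refine Finset.card_le_card_of_injOn (fun p (i : Fin n) ↦ p.coeff i)
    (fun _ _ ↦ Finset.mem_univ _) fun p hp p' hp' h ↦ ?_
  obtain ⟨hpm, rfl⟩ := hs p hp
  obtain ⟨hpm', hdeg⟩ := hs p' hp'
  ext m
  rcases lt_trichotomy m p.natDegree with hm | rfl | hm
  · exact congrFun h ⟨m, hm⟩
  · rw [hpm.coeff_natDegree, ← hdeg, hpm'.coeff_natDegree]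
  · rw [coeff_eq_zero_of_natDegree_lt hm, coeff_eq_zero_of_natDegree_lt (hdeg ▸ hm)]

end Polynomial

section DirichletCharacters

variable [CommRing F] (Q : F[X])

def dirichletCharOfMulChar (ψ : MulChar (AdjoinRoot Q) ℂ) : F[X] → ℂ :=
  fun A ↦ ψ (AdjoinRoot.mk Q A)

variable {Q}

theorem dirichletCharOfMulChar_injective : Function.Injective (dirichletCharOfMulChar Q) := by
  refine fun ψ ψ' h ↦ MulChar.ext' fun x ↦ ?_
  obtain ⟨A, rfl⟩ := AdjoinRoot.mk_surjective x
  exact congrFun h A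

theorem isDirichletChar_dirichletCharOfMulChar (ψ : MulChar (AdjoinRoot Q) ℂ) :
    IsDirichletChar Q (dirichletCharOfMulChar Q ψ) := by
  refine ⟨fun A B ↦ ?_, fun A B ↦ ?_, fun A ↦ ?_⟩
  · simp [dirichletCharOfMulChar]
  · simp [dirichletCharOfMulChar]
  · rw [dirichletCharOfMulChar, MulChar.apply_ne_zero_iff, AdjoinRoot.isUnit_mk_iff_isCoprime]

theorem exists_dirichletCharOfMulChar_eq {χ : F[X] → ℂ} (hχ : IsDirichletChar Q χ) :
    ∃ ψ, dirichletCharOfMulChar Q ψ = χ := by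
  obtain ⟨hper, hmul, hne⟩ := hχ
  have hone : χ 1 = 1 := by
    have h1 : χ 1 ≠ 0 := (hne 1).mpr isCoprime_one_left
    exact mul_left_cancel₀ h1 (by rw [← hmul, mul_one, mul_one])
  set g := fun x ↦ χ (Function.surjInv (AdjoinRoot.mk_surjective (g := Q)) x)
  have hg : ∀ A, g (AdjoinRoot.mk Q A) = χ A := by
    intro A
    obtain ⟨C, hC⟩ := AdjoinRoot.mk_eq_mk.mp
      (Function.surjInv_eq AdjoinRoot.mk_surjective (AdjoinRoot.mk Q A))
    simp only [g, sub_eq_iff_eq_add.mp hC, mul_comm Q C, add_comm _ A, hper]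
  refine ⟨{ toFun := g, map_one' := ?_, map_mul' := ?_, map_nonunit' := ?_ }, funext hg⟩
  · rw [← map_one (AdjoinRoot.mk Q), hg, hone]
  · intro x y
    obtain ⟨A, rfl⟩ := AdjoinRoot.mk_surjective x
    obtain ⟨B, rfl⟩ := AdjoinRoot.mk_surjective y
    simp only [← map_mul, hg, hmul]
  · intro x hx
    obtain ⟨A, rfl⟩ := AdjoinRoot.mk_surjective x
    rw [AdjoinRoot.isUnit_mk_iff_isCoprime, ← hne, not_not] at hx
    rw [hg, hx]

theorem setOf_isDirichletChar_eq_range :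
    {χ | IsDirichletChar Q χ} = Set.range (dirichletCharOfMulChar Q) :=
  Set.ext fun _ ↦ ⟨exists_dirichletCharOfMulChar_eq,
    fun ⟨ψ, hψ⟩ ↦ hψ ▸ isDirichletChar_dirichletCharOfMulChar ψ⟩

theorem dirichletCharOfMulChar_one : dirichletCharOfMulChar Q 1 = trivialChar Q := by
  funext A
  by_cases hA : IsCoprime A Q
  · simp [dirichletCharOfMulChar, trivialChar, hA,
      MulChar.one_apply (AdjoinRoot.isUnit_mk_iff_isCoprime.mpr hA)]
  · simp [dirichletCharOfMulChar, trivialChar, hA,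
      MulChar.map_nonunit _ (AdjoinRoot.isUnit_mk_iff_isCoprime.not.mpr hA)]

theorem isDirichletChar_trivialChar : IsDirichletChar Q (trivialChar Q) :=
  dirichletCharOfMulChar_one (Q := Q) ▸ isDirichletChar_dirichletCharOfMulChar 1

theorem norm_trivialChar_le_one (A : F[X]) : ‖trivialChar Q A‖ ≤ 1 := by
  unfold trivialChar
  split_ifs <;> simp

theorem finite_setOf_isDirichletChar [Finite (AdjoinRoot Q)] :
    {χ | IsDirichletChar Q χ}.Finite :=
  setOf_isDirichletChar_eq_range (Q := Q) ▸ Set.finite_range _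

end DirichletCharacters

section LValues

variable [Field F] {Q : F[X]}

theorem finsum_isDirichletChar_apply [Finite (AdjoinRoot Q)] (A : F[X]) :
    ∑ᶠ χ ∈ {χ | IsDirichletChar Q χ}, χ A =
      if AdjoinRoot.mk Q A = 1 then (polyPhi Q : ℂ) else 0 := by
  rw [setOf_isDirichletChar_eq_range, finsum_mem_range dirichletCharOfMulChar_injective]
  exact MulChar.finsum_apply_eq_ite _

variable [Finite F]

theorem finsum_Lhalf_eq_polyPhi (q : ℕ) {D : ℕ} (hQ : Q ≠ 0) (hD : D < Q.natDegree) :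
    ∑ᶠ χ ∈ {χ | IsDirichletChar Q χ}, Lhalf q D χ = polyPhi Q := by
  have := AdjoinRoot.finite_of_ne_zero hQ
  have hT : {N : F[X] | N.Monic ∧ N.natDegree ≤ D}.Finite :=
    (finite_setOf_natDegree_le D).subset fun _ h ↦ h.2
  unfold Lhalf
  rw [finsum_mem_comm _ finite_setOf_isDirichletChar hT]
  simp_rw [div_eq_mul_inv, ← finsum_mem_mul, finsum_isDirichletChar_apply]
  rw [finsum_mem_eq_finite_toFinset_sum _ hT, Finset.sum_eq_single_of_mem 1 (by simp)]
  · simp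
  · intro N hN hN1
    rw [Set.Finite.mem_toFinset] at hN
    simp [AdjoinRoot.mk_eq_one_iff_of_natDegree_lt (hN.2.trans_lt hD), hN1]

theorem finsum_Lhalf_nontrivial_eq (q : ℕ) {D : ℕ} (hQ : Q ≠ 0) (hD : D < Q.natDegree) :
    ∑ᶠ χ ∈ {χ | IsDirichletChar Q χ ∧ χ ≠ trivialChar Q}, Lhalf q D χ =
      polyPhi Q - Lhalf q D (trivialChar Q) := by
  have := AdjoinRoot.finite_of_ne_zero hQ
  have hsplit : {χ | IsDirichletChar Q χ} =
      insert (trivialChar Q) {χ | IsDirichletChar Q χ ∧ χ ≠ trivialChar Q} := by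
    ext χ
    by_cases h : χ = trivialChar Q <;> simp [h, isDirichletChar_trivialChar]
  rw [eq_sub_iff_add_eq', ← finsum_Lhalf_eq_polyPhi q hQ hD, hsplit,
    finsum_mem_insert _ (fun h ↦ h.2 rfl) (finite_setOf_isDirichletChar.subset fun _ h ↦ h.1)]

end LValues

section Bounds

variable [Field F] [Fintype F]

theorem polyPhi_eq_card_pow_sub_one {Q : F[X]} (hQ : Irreducible Q) :
    polyPhi Q = Fintype.card F ^ Q.natDegree - 1 := by
  have := Fact.mk hQ
  change Nat.card (AdjoinRoot Q)ˣ = _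
  rw [Nat.card_units, AdjoinRoot.natCard_eq_pow_natDegree hQ.ne_zero, Nat.card_eq_fintype_card]

theorem norm_Lhalf_le (D : ℕ) {χ : F[X] → ℂ} (hχ : ∀ N, ‖χ N‖ ≤ 1) :
    ‖Lhalf (Fintype.card F) D χ‖ ≤ ∑ n ∈ Finset.range (D + 1), √(Fintype.card F : ℝ) ^ n := by
  set r := √(Fintype.card F : ℝ)
  have hr : 0 < r := Real.sqrt_pos.mpr (by exact_mod_cast Fintype.card_pos)
  have hT : {N : F[X] | N.Monic ∧ N.natDegree ≤ D}.Finite :=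
    (finite_setOf_natDegree_le D).subset fun _ h ↦ h.2
  rw [Lhalf, finsum_mem_eq_finite_toFinset_sum _ hT]
  calc _ ≤ ∑ N ∈ hT.toFinset, (r ^ N.natDegree)⁻¹ := by
        refine norm_sum_le_of_le _ fun N _ ↦ ?_
        rw [norm_div, Complex.norm_real, Real.norm_of_nonneg (Real.sqrt_nonneg _),
          Real.sqrt_pow_eq_pow_sqrt (Nat.cast_nonneg _), ← one_div]
        exact div_le_div_of_nonneg_right (hχ N) (by positivity)
    _ = ∑ n ∈ Finset.range (D + 1), ∑ N ∈ hT.toFinset with N.natDegree = n, (r ^ n)⁻¹ := by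
        rw [← Finset.sum_fiberwise_of_maps_to (g := natDegree) (t := Finset.range (D + 1))
          fun N hN ↦ Finset.mem_range_succ_iff.mpr (hT.mem_toFinset.mp hN).2]
        refine Finset.sum_congr rfl fun n _ ↦ Finset.sum_congr rfl fun N hN ↦ ?_
        rw [(Finset.mem_filter.mp hN).2]
    _ ≤ ∑ n ∈ Finset.range (D + 1), r ^ n := by
        refine Finset.sum_le_sum fun n _ ↦ ?_
        have hcard := card_le_of_forall_monic_natDegree_eq (R := F) (n := n)
          (s := hT.toFinset.filter (·.natDegree = n))
          fun N hN ↦ ⟨(hT.mem_toFinset.mp (Finset.mem_filter.mp hN).1).1,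
            (Finset.mem_filter.mp hN).2⟩
        rw [Finset.sum_const, nsmul_eq_mul]
        calc _ ≤ ((Fintype.card F ^ n : ℕ) : ℝ) * (r ^ n)⁻¹ := by gcongr
          _ = r ^ n := by
            rw [Nat.cast_pow, ← Real.sq_sqrt (Nat.cast_nonneg (Fintype.card F)), ← pow_mul,
              pow_mul', sq, mul_inv_cancel_right₀ (pow_ne_zero _ hr.ne')]

end Bounds

/-- The first moment: for monic irreducible `Q` with `𝔇 = deg Q - 1`,
`(1/φ(Q)) Σ_{χ ≠ χ₀} L(1/2,χ) = 1 + O(q^{-𝔇/2})`,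
the implied constant depending only on `q`. -/
theorem first_moment_of_Dirichlet_L_functions
    (F : Type*) [Field F] [Fintype F] (q : ℕ) (hq : Fintype.card F = q) :
    ∃ C : ℝ, ∀ Q : Polynomial F, Q.Monic → Irreducible Q →
      ‖(polyPhi Q : ℂ)⁻¹ *
          (∑ᶠ χ ∈ {χ : Polynomial F → ℂ | IsDirichletChar Q χ ∧ χ ≠ trivialChar Q},
            Lhalf q (Q.natDegree - 1) χ) - 1‖ ≤
        C / Real.sqrt ((q : ℝ) ^ (Q.natDegree - 1)) := by
  subst hq
  set r := √(Fintype.card F : ℝ)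
  have hr : 1 < r := Real.lt_sqrt_of_sq_lt (by exact_mod_cast Fintype.one_lt_card)
  refine ⟨1 / (r * (r - 1)), fun Q _ hQ ↦ ?_⟩
  obtain ⟨D, hD⟩ := Nat.exists_eq_add_one_of_ne_zero hQ.natDegree_pos.ne'
  have hφ : (polyPhi Q : ℝ) = (r ^ 2) ^ (D + 1) - 1 := by
    rw [polyPhi_eq_card_pow_sub_one hQ, hD, Nat.cast_sub (Nat.one_le_pow _ _ Fintype.card_pos),
      Nat.cast_pow, Real.sq_sqrt (Nat.cast_nonneg _), Nat.cast_one]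
  have hφ0 : (polyPhi Q : ℂ) ≠ 0 := by
    have : 0 < (polyPhi Q : ℝ) := hφ ▸ sub_pos.mpr (one_lt_pow₀ (by nlinarith) D.succ_ne_zero)
    exact_mod_cast this.ne'
  rw [hD, Nat.add_sub_cancel, finsum_Lhalf_nontrivial_eq _ hQ.ne_zero (hD ▸ D.lt_succ_self),
    show (polyPhi Q : ℂ)⁻¹ * (polyPhi Q - Lhalf _ D (trivialChar Q)) - 1 =
      -(Lhalf _ D (trivialChar Q) / polyPhi Q) by field_simp; ring,
    norm_neg, norm_div, Complex.norm_natCast, hφ, Real.sqrt_pow_eq_pow_sqrt (Nat.cast_nonneg _)]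
  exact (div_le_div_of_nonneg_right (norm_Lhalf_le D (norm_trivialChar_le_one (Q := Q)))
    (by rw [← hφ]; positivity)).trans (geom_sum_div_sq_pow_sub_one_le hr D)
end
end

section
/- For all sufficiently large integers x (the threshold depending only on q), the number of monic polynomials N ∈ F_q[x] with deg N ≤ x all of whose monic irreducible factors have degree at most log_q x + log_q log_q x is at most q^{3x/(log_q x)^{1/2}}; that is, Ψ(x, log_q x + log_q log_q x) ≤ q^{3x/(log_q x)^{1/2}}. -/
open Polynomial

noncomputable section

variable {F : Type*}

/-- `p₊(N)`: the greatest degree of a monic irreducible factor of `N` (with `p₊(1) = 0`). -/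
def pPlus [Field F] (N : Polynomial F) : ℕ :=
  sSup {d : ℕ | ∃ P : Polynomial F, P.Monic ∧ Irreducible P ∧ P ∣ N ∧ P.natDegree = d}

/-!
Rankin's trick. Let `S` be the set of monic `N` with `deg N ≤ x` whose irreducible factors have
degree at most `D`. For `0 < t < 1`, unique factorisation and the bound `q^d` on the number of
monic polynomials of degree `d` give
`#S · t^x ≤ ∑_{N∈S} t^{deg N} ≤ ∏_{deg P≤D} (1 - t^{deg P})⁻¹ ≤ exp (∑_{d≤D} (qt)^d / (1-t))`.
Take `K = √(log_q x)`, `t = q^{-1/K}` and `D = ⌊log_q x + log_q log_q x⌋`. Then `q^D ≤ x log_q x`,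
so `(qt)^D ≤ x K² q^{-K}` and the exponent is `O(x K⁵ q^{-K})`, which is at most `2 x log q / K`
for large `x`; together with `t^{-x} = q^{x/K}` this gives `#S ≤ q^{3x/K}`.
-/

open Finset UniqueFactorizationMonoid Real Filter

theorem Real.inv_one_sub_le_exp {u t : ℝ} (hu : 0 ≤ u) (hut : u ≤ t) (ht : t < 1) :
    (1 - u)⁻¹ ≤ exp (u / (1 - t)) := by
  have hu1 : 0 < 1 - u := by linarith
  calc (1 - u)⁻¹ = u / (1 - u) + 1 := by field_simp; ring
    _ ≤ exp (u / (1 - u)) := add_one_le_exp _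
    _ ≤ exp (u / (1 - t)) := by gcongr

theorem Real.prod_inv_one_sub_le_exp {ι : Type*} {s : Finset ι} {u : ι → ℝ} {t : ℝ}
    (ht : t < 1) (hu : ∀ i ∈ s, 0 ≤ u i ∧ u i ≤ t) :
    ∏ i ∈ s, (1 - u i)⁻¹ ≤ exp (∑ i ∈ s, u i / (1 - t)) := by
  rw [exp_sum]
  refine prod_le_prod (fun i hi => inv_nonneg.2 ?_) fun i hi =>
    inv_one_sub_le_exp (hu i hi).1 (hu i hi).2 ht
  linarith [(hu i hi).2]

theorem Real.inv_one_sub_exp_neg_le {a : ℝ} (ha0 : 0 < a) (ha1 : a ≤ 1) :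
    (1 - exp (-a))⁻¹ ≤ 2 / a := by
  have he : exp (-a) * (1 + a) ≤ 1 := by
    calc exp (-a) * (1 + a) ≤ exp (-a) * exp a := by gcongr; linarith [add_one_le_exp a]
      _ = 1 := by rw [← exp_add, neg_add_cancel, exp_zero]
  have hpos : 0 < 1 - exp (-a) := by linarith [exp_lt_one_iff.2 (neg_lt_zero.2 ha0)]
  rw [inv_le_comm₀ hpos (by positivity), inv_div]
  nlinarith [exp_pos (-a)]

theorem Real.inv_one_sub_rpow_neg_inv_le {Q K : ℝ} (hQ : 1 < Q) (hK0 : 0 < K) (hK : log Q ≤ K) :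
    (1 - Q ^ (-K⁻¹))⁻¹ ≤ 2 * K / log Q := by
  have hlog : 0 < log Q := log_pos hQ
  have : Q ^ (-K⁻¹) = exp (-(log Q / K)) := by rw [rpow_def_of_pos (by linarith)]; ring_nf
  rw [this]
  calc _ ≤ 2 / (log Q / K) := inv_one_sub_exp_neg_le (by positivity) ((div_le_one hK0).2 hK)
    _ = 2 * K / log Q := by field_simp

theorem Real.mul_rpow_neg_inv_pow_le {Q K : ℝ} (hQ : 1 < Q) (hK : 1 ≤ K) {D : ℕ}
    (hD : (D : ℝ) ≤ K ^ 2 + logb Q (K ^ 2)) :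
    (Q * Q ^ (-K⁻¹)) ^ D ≤ K ^ 2 * Q ^ (K ^ 2) * Q ^ (-K) := by
  have hQ0 : 0 < Q := by linarith
  have hs : K⁻¹ ≤ 1 := inv_le_one_of_one_le₀ hK
  have hlogb : 0 ≤ logb Q (K ^ 2) := logb_nonneg hQ (one_le_pow₀ hK)
  calc (Q * Q ^ (-K⁻¹)) ^ D = Q ^ ((1 - K⁻¹) * D) := by
        rw [rpow_mul_natCast hQ0.le, sub_eq_add_neg, rpow_add hQ0, rpow_one]
    _ ≤ Q ^ ((1 - K⁻¹) * (K ^ 2 + logb Q (K ^ 2))) := by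
        gcongr
        exact hQ.le
    _ = Q ^ (K ^ 2 + logb Q (K ^ 2)) * Q ^ (-(K + K⁻¹ * logb Q (K ^ 2))) := by
        rw [← rpow_add hQ0]
        congr 1
        field_simp
        ring
    _ ≤ Q ^ (K ^ 2 + logb Q (K ^ 2)) * Q ^ (-K) := by
        have : 0 ≤ K⁻¹ * logb Q (K ^ 2) := by positivity
        gcongr
        · exact hQ.le
        · linarith
    _ = K ^ 2 * Q ^ (K ^ 2) * Q ^ (-K) := by
        rw [rpow_add hQ0, rpow_logb hQ0 hQ.ne' (by positivity)]
        ring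

/-- Conditions on `K`, which stands for `√(log_Q x)`, under which Rankin's bound with the
parameter `t = Q^{-1/K}` yields the exponent `3x/K`. -/
structure RankinAdmissible (Q K : ℝ) : Prop where
  one_le : 1 ≤ K
  log_le : log Q ≤ K
  logb_sq_le : logb Q (K ^ 2) ≤ K ^ 2
  decay : 2 * K ^ 6 * Q ^ (-K) ≤ log Q ^ 2

theorem eventually_rankinAdmissible {Q : ℝ} (hQ : 1 < Q) :
    ∀ᶠ K in atTop, RankinAdmissible Q K := by
  have hlog : 0 < log Q := log_pos hQ
  have hlogb : ∀ᶠ K : ℝ in atTop, logb Q (K ^ 2) ≤ K ^ 2 := by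
    have hsq := tendsto_pow_atTop (α := ℝ) two_ne_zero
    filter_upwards [hsq.eventually (isLittleO_log_id_atTop.bound hlog),
      hsq.eventually (eventually_ge_atTop 0)] with K h h0
    rw [Real.norm_eq_abs, Real.norm_eq_abs, id, abs_of_nonneg h0] at h
    rw [logb, div_le_iff₀ hlog]
    linarith [le_abs_self (log (K ^ 2))]
  have hdecay : ∀ᶠ K : ℝ in atTop, 2 * K ^ 6 * Q ^ (-K) ≤ log Q ^ 2 := by
    have h := (tendsto_rpow_mul_exp_neg_mul_atTop_nhds_zero 6 (log Q) hlog).const_mul 2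
    rw [mul_zero] at h
    filter_upwards [h.eventually_lt_const (by positivity : (0 : ℝ) < log Q ^ 2)] with K hK
    refine Eq.trans_le ?_ hK.le
    rw [rpow_def_of_pos (by linarith), rpow_ofNat]
    ring_nf
  filter_upwards [eventually_ge_atTop 1, eventually_ge_atTop (log Q), hlogb, hdecay]
    with K h1 h2 h3 h4
  exact ⟨h1, h2, h3, h4⟩

theorem RankinAdmissible.exponent_le {Q K : ℝ} (hQ : 1 < Q) (hK : RankinAdmissible Q K) {D : ℕ}
    (hD : (D : ℝ) ≤ K ^ 2 + logb Q (K ^ 2)) :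
    D * (Q * Q ^ (-K⁻¹)) ^ D / (1 - Q ^ (-K⁻¹)) ≤ 2 * log Q * Q ^ (K ^ 2) / K := by
  have hlog : 0 < log Q := log_pos hQ
  have hK0 : 0 < K := by linarith [hK.one_le]
  have ht : Q ^ (-K⁻¹) < 1 := rpow_lt_one_of_one_lt_of_neg hQ (by simpa using hK0)
  have hD2 : (D : ℝ) ≤ 2 * K ^ 2 := by linarith [hK.logb_sq_le]
  calc D * (Q * Q ^ (-K⁻¹)) ^ D / (1 - Q ^ (-K⁻¹))
      = D * (Q * Q ^ (-K⁻¹)) ^ D * (1 - Q ^ (-K⁻¹))⁻¹ := div_eq_mul_inv _ _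
    _ ≤ 2 * K ^ 2 * (K ^ 2 * Q ^ (K ^ 2) * Q ^ (-K)) * (2 * K / log Q) := by
        have : 0 ≤ (1 - Q ^ (-K⁻¹))⁻¹ := inv_nonneg.2 (by linarith)
        gcongr
        · exact mul_rpow_neg_inv_pow_le hQ hK.one_le hD
        · exact inv_one_sub_rpow_neg_inv_le hQ hK0 hK.log_le
    _ = 2 * (2 * K ^ 6 * Q ^ (-K)) * Q ^ (K ^ 2) / (log Q * K) := by
        field_simp
    _ ≤ 2 * log Q ^ 2 * Q ^ (K ^ 2) / (log Q * K) := by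
        gcongr
        exact hK.decay
    _ = 2 * log Q * Q ^ (K ^ 2) / K := by
        field_simp

namespace Polynomial

variable [Field F]

theorem natDegree_le_pPlus_of_mem_normalizedFactors [DecidableEq F] {N P : F[X]} (hN : N ≠ 0)
    (hP : P ∈ normalizedFactors N) : P.natDegree ≤ pPlus N := by
  obtain ⟨hPirr, hPmonic, hPN⟩ := (Polynomial.mem_normalizedFactors_iff hN).1 hP
  refine le_csSup ⟨N.natDegree, ?_⟩ ⟨P, hPmonic, hPirr, hPN, rfl⟩
  rintro _ ⟨Q, -, -, hQN, rfl⟩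
  exact natDegree_le_of_dvd hQN hN

theorem Monic.prod_pow_count_normalizedFactors [DecidableEq F] {N : F[X]} (hN : N.Monic)
    {I : Finset F[X]} (hI : (normalizedFactors N).toFinset ⊆ I) :
    ∏ P ∈ I, P ^ (normalizedFactors N).count P = N := by
  rw [← prod_multiset_count_of_subset _ _ hI]
  simpa [hN.leadingCoeff] using leadingCoeff_mul_prod_normalizedFactors N

theorem Monic.natDegree_eq_sum_count_mul [DecidableEq F] {N : F[X]} (hN : N.Monic)
    {I : Finset F[X]} (hI : (normalizedFactors N).toFinset ⊆ I) :
    N.natDegree = ∑ P ∈ I, (normalizedFactors N).count P * P.natDegree := by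
  have hne : ∀ P ∈ I, P ^ (normalizedFactors N).count P ≠ 0 := fun P _ hP0 => by
    obtain ⟨rfl, hk⟩ := pow_eq_zero_iff'.1 hP0
    exact hk (Multiset.count_eq_zero.2 (zero_notMem_normalizedFactors N))
  conv_lhs => rw [← hN.prod_pow_count_normalizedFactors hI]
  rw [natDegree_prod _ _ hne]
  simp only [Polynomial.natDegree_pow]

theorem Monic.count_normalizedFactors_le_natDegree [DecidableEq F] {N : F[X]} (hN : N.Monic)
    (P : F[X]) : (normalizedFactors N).count P ≤ N.natDegree := by
  by_cases hP : P ∈ normalizedFactors N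
  · rw [hN.natDegree_eq_sum_count_mul subset_rfl]
    calc (normalizedFactors N).count P ≤ (normalizedFactors N).count P * P.natDegree :=
          Nat.le_mul_of_pos_right _ (irreducible_of_normalized_factor P hP).natDegree_pos
      _ ≤ _ := single_le_sum (f := fun Q => (normalizedFactors N).count Q * Q.natDegree)
          (fun _ _ => Nat.zero_le _) (Multiset.mem_toFinset.2 hP)
  · simp [Multiset.count_eq_zero.2 hP]

theorem injOn_coeff_monic (d : ℕ) :
    Set.InjOn (fun (P : F[X]) (i : Fin d) => P.coeff i) {P | P.Monic ∧ P.natDegree = d} := by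
  rintro P ⟨hPm, hPd⟩ Q ⟨hQm, hQd⟩ h
  ext n
  rcases lt_trichotomy n d with hn | rfl | hn
  · exact congrFun h ⟨n, hn⟩
  · rw [← hPd, hPm.coeff_natDegree, hPd, ← hQd, hQm.coeff_natDegree]
  · rw [coeff_eq_zero_of_natDegree_lt (hPd ▸ hn), coeff_eq_zero_of_natDegree_lt (hQd ▸ hn)]

theorem card_le_of_forall_monic_natDegree_eq_s6 [Fintype F] {d : ℕ} {J : Finset F[X]}
    (hJ : ∀ P ∈ J, P.Monic ∧ P.natDegree = d) : #J ≤ Fintype.card F ^ d := by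
  classical
  simpa using card_le_card_of_injOn _ (fun P _ => mem_univ _)
    fun P hP Q hQ => injOn_coeff_monic d (hJ P hP) (hJ Q hQ)

theorem finite_setOf_monic_natDegree_le [Fintype F] (n : ℕ) :
    {P : F[X] | P.Monic ∧ P.natDegree ≤ n}.Finite := by
  have h : {P : F[X] | P.Monic ∧ P.natDegree ≤ n} =
      ⋃ d ∈ Set.Iic n, {P | P.Monic ∧ P.natDegree = d} := by
    ext P
    simp
  rw [h]
  exact (Set.finite_Iic n).biUnion fun d _ =>
    Set.Finite.of_finite_image (Set.toFinite _) (injOn_coeff_monic d)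

theorem sum_pow_natDegree_le_prod_inv_one_sub [DecidableEq F] {t : ℝ} (ht0 : 0 ≤ t)
    (ht1 : t < 1) {S I : Finset F[X]}
    (hS : ∀ N ∈ S, N.Monic ∧ (normalizedFactors N).toFinset ⊆ I)
    (hI : ∀ P ∈ I, 0 < P.natDegree) :
    ∑ N ∈ S, t ^ N.natDegree ≤ ∏ P ∈ I, (1 - t ^ P.natDegree)⁻¹ := by
  let M := S.sup natDegree
  let exponents (N : F[X]) (P : I) : ℕ := (normalizedFactors N).count (P : F[X])
  let weight (e : I → ℕ) : ℝ := ∏ P : I, (t ^ (P : F[X]).natDegree) ^ e P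
  have hweight : ∀ N ∈ S, t ^ N.natDegree = weight (exponents N) := fun N hN => by
    rw [(hS N hN).1.natDegree_eq_sum_count_mul (hS N hN).2, ← prod_pow_eq_pow_sum,
      ← prod_coe_sort]
    simp only [weight, exponents, ← pow_mul, mul_comm]
  have hinj : Set.InjOn exponents S := fun N hN N' hN' h => by
    rw [← (hS N hN).1.prod_pow_count_normalizedFactors (hS N hN).2,
      ← (hS N' hN').1.prod_pow_count_normalizedFactors (hS N' hN').2]
    exact prod_congr rfl fun P hP => congrArg (P ^ ·) (congrFun h ⟨P, hP⟩ :)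
  have hmaps : ∀ N ∈ S, exponents N ∈ Fintype.piFinset fun _ => range (M + 1) :=
    fun N hN => Fintype.mem_piFinset.2 fun P => mem_range.2 <| Nat.lt_succ_of_le <|
      ((hS N hN).1.count_normalizedFactors_le_natDegree P).trans (le_sup hN)
  calc ∑ N ∈ S, t ^ N.natDegree = ∑ e ∈ S.image exponents, weight e := by
        rw [sum_image hinj]
        exact sum_congr rfl hweight
    _ ≤ ∑ e ∈ Fintype.piFinset fun _ => range (M + 1), weight e :=
        sum_le_sum_of_subset_of_nonneg (image_subset_iff.2 hmaps) fun _ _ _ => by positivity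
    _ = ∏ P : I, ∑ k ∈ range (M + 1), (t ^ (P : F[X]).natDegree) ^ k :=
        (prod_univ_sum _ _).symm
    _ ≤ ∏ P : I, (1 - t ^ (P : F[X]).natDegree)⁻¹ := by
        refine prod_le_prod (fun _ _ => by positivity) fun P _ => ?_
        have hr : t ^ (P : F[X]).natDegree < 1 := pow_lt_one₀ ht0 ht1 (hI P.1 P.2).ne'
        have h := geom_sum_Ico_le_of_lt_one (m := 0) (n := M + 1) (pow_nonneg ht0 _) hr
        rwa [← Finset.range_eq_Ico, pow_zero, one_div] at h
    _ = ∏ P ∈ I, (1 - t ^ P.natDegree)⁻¹ :=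
        prod_coe_sort I fun P => (1 - t ^ P.natDegree)⁻¹

theorem sum_pow_natDegree_le_sum_card_mul_pow [Fintype F] {t : ℝ} (ht : 0 ≤ t) {D : ℕ}
    {I : Finset F[X]} (hI : ∀ P ∈ I, P.Monic ∧ P.natDegree ∈ Icc 1 D) :
    ∑ P ∈ I, t ^ P.natDegree ≤ ∑ d ∈ Icc 1 D, (Fintype.card F * t) ^ d := by
  classical
  rw [← sum_fiberwise_of_maps_to fun P hP => (hI P hP).2]
  refine sum_le_sum fun d _ => ?_
  rw [sum_congr rfl fun P hP => by rw [(mem_filter.1 hP).2], sum_const, nsmul_eq_mul, mul_pow]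
  gcongr
  exact_mod_cast card_le_of_forall_monic_natDegree_eq_s6 fun P hP =>
    ⟨(hI P (mem_filter.1 hP).1).1, (mem_filter.1 hP).2⟩

theorem card_mul_pow_le_exp [Fintype F] [DecidableEq F] {t : ℝ} (ht0 : 0 < t) (ht1 : t < 1)
    (hqt : 1 ≤ Fintype.card F * t) {x D : ℕ} {S : Finset F[X]}
    (hS : ∀ N ∈ S, N.Monic ∧ N.natDegree ≤ x ∧
      ∀ P ∈ normalizedFactors N, P.natDegree ≤ D) :
    #S * t ^ x ≤ exp (D * (Fintype.card F * t) ^ D / (1 - t)) := by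
  set I := S.biUnion fun N => (normalizedFactors N).toFinset
  have hI : ∀ P ∈ I, P.Monic ∧ P.natDegree ∈ Icc 1 D := by
    intro P hP
    obtain ⟨N, hN, hPN⟩ := mem_biUnion.1 hP
    rw [Multiset.mem_toFinset] at hPN
    obtain ⟨hirr, hmonic, -⟩ :=
      (Polynomial.mem_normalizedFactors_iff (hS N hN).1.ne_zero).1 hPN
    exact ⟨hmonic, mem_Icc.2 ⟨hirr.natDegree_pos, (hS N hN).2.2 P hPN⟩⟩
  calc #S * t ^ x ≤ ∑ N ∈ S, t ^ N.natDegree := by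
        rw [← nsmul_eq_mul]
        exact card_nsmul_le_sum _ _ _ fun N hN => pow_le_pow_of_le_one ht0.le ht1.le (hS N hN).2.1
    _ ≤ ∏ P ∈ I, (1 - t ^ P.natDegree)⁻¹ :=
        sum_pow_natDegree_le_prod_inv_one_sub ht0.le ht1
          (fun N hN => ⟨(hS N hN).1, subset_biUnion_of_mem
            (fun N => (normalizedFactors N).toFinset) hN⟩)
          fun P hP => (mem_Icc.1 (hI P hP).2).1
    _ ≤ exp (∑ P ∈ I, t ^ P.natDegree / (1 - t)) :=
        prod_inv_one_sub_le_exp ht1 fun P hP =>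
          ⟨by positivity, pow_le_of_le_one ht0.le ht1.le
            (Nat.one_le_iff_ne_zero.1 (mem_Icc.1 (hI P hP).2).1)⟩
    _ ≤ exp (∑ d ∈ Icc 1 D, (Fintype.card F * t) ^ d / (1 - t)) := by
        rw [← sum_div, ← sum_div]
        gcongr
        exact sum_pow_natDegree_le_sum_card_mul_pow ht0.le hI
    _ ≤ exp (D * (Fintype.card F * t) ^ D / (1 - t)) := by
        rw [← sum_div]
        gcongr
        calc ∑ d ∈ Icc 1 D, (Fintype.card F * t) ^ d
            ≤ #(Icc 1 D) • (Fintype.card F * t) ^ D :=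
              sum_le_card_nsmul _ _ _ fun d hd => pow_le_pow_right₀ hqt (mem_Icc.1 hd).2
          _ = D * (Fintype.card F * t) ^ D := by simp

theorem card_le_rpow_of_rankinAdmissible [Fintype F] [DecidableEq F] {K : ℝ}
    (hK : RankinAdmissible (Fintype.card F) K) {x D : ℕ}
    (hx : (x : ℝ) = (Fintype.card F : ℝ) ^ (K ^ 2))
    (hD : (D : ℝ) ≤ K ^ 2 + logb (Fintype.card F) (K ^ 2)) {S : Finset F[X]}
    (hS : ∀ N ∈ S, N.Monic ∧ N.natDegree ≤ x ∧
      ∀ P ∈ normalizedFactors N, P.natDegree ≤ D) :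
    (#S : ℝ) ≤ (Fintype.card F : ℝ) ^ (3 * x / K) := by
  set Q : ℝ := (Fintype.card F : ℝ)
  have hQ : 1 < Q := Nat.one_lt_cast.2 Fintype.one_lt_card
  have hQ0 : 0 < Q := by linarith
  have hK0 : 0 < K := by linarith [hK.one_le]
  set t := Q ^ (-K⁻¹)
  have ht0 : 0 < t := rpow_pos_of_pos hQ0 _
  have ht1 : t < 1 := rpow_lt_one_of_one_lt_of_neg hQ (by simpa using hK0)
  have hqt : 1 ≤ Q * t := by
    have : K⁻¹ ≤ 1 := inv_le_one_of_one_le₀ hK.one_le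
    calc 1 ≤ Q ^ (1 + -K⁻¹) := one_le_rpow hQ.le (by linarith)
      _ = Q * t := by rw [rpow_add hQ0, rpow_one]
  have htx : t ^ x * Q ^ (x / K) = 1 := by
    rw [← rpow_natCast, ← rpow_mul hQ0.le, ← rpow_add hQ0]
    simp [div_eq_inv_mul]
  calc (#S : ℝ) = #S * t ^ x * Q ^ (x / K) := by rw [mul_assoc, htx, mul_one]
    _ ≤ exp (D * (Q * t) ^ D / (1 - t)) * Q ^ (x / K) := by
        gcongr
        exact card_mul_pow_le_exp ht0 ht1 hqt hS
    _ ≤ exp (2 * log Q * x / K) * Q ^ (x / K) := by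
        gcongr ?_ * _
        rw [exp_le_exp, hx]
        exact hK.exponent_le hQ hD
    _ = Q ^ (3 * x / K) := by
        rw [rpow_def_of_pos hQ0, rpow_def_of_pos hQ0, ← exp_add]
        ring_nf

end Polynomial

/-- The de Bruijn-type bound for smooth polynomials: for all sufficiently large `x`
(the threshold depending only on `q`), the number of monic `N` with `deg N ≤ x` all of
whose monic irreducible factors have degree at most `log_q x + log_q log_q x` is at most
`q^{3x/(log_q x)^{1/2}}`. -/
theorem smooth_polynomial_count
    (F : Type*) [Field F] [Fintype F] (q : ℕ) (hq : Fintype.card F = q) :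
    ∃ x₀ : ℕ, ∀ x : ℕ, x₀ ≤ x →
      ({N : Polynomial F | N.Monic ∧ N.natDegree ≤ x ∧
          (pPlus N : ℝ) ≤ Real.logb q x + Real.logb q (Real.logb q x)}.ncard : ℝ) ≤
        (q : ℝ) ^ (3 * (x : ℝ) / Real.sqrt (Real.logb q x)) := by
  classical
  subst hq
  have hQ : (1 : ℝ) < Fintype.card F := Nat.one_lt_cast.2 Fintype.one_lt_card
  have hK : Tendsto (fun x : ℕ => √(logb (Fintype.card F) x)) atTop atTop :=
    tendsto_sqrt_atTop.comp ((tendsto_logb_atTop hQ).comp tendsto_natCast_atTop_atTop)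
  obtain ⟨x₀, hx₀⟩ := eventually_atTop.1 (hK.eventually (eventually_rankinAdmissible hQ))
  refine ⟨x₀, fun x hx => ?_⟩
  have hadm := hx₀ x hx
  set L := logb (Fintype.card F) x
  have hL : 1 ≤ L := one_le_sqrt.1 hadm.one_le
  have hKL : √L ^ 2 = L := sq_sqrt (by linarith)
  have hx0 : (x : ℝ) ≠ 0 := fun h => by norm_num [L, h] at hL
  rw [Set.ncard_eq_toFinset_card _
    ((finite_setOf_monic_natDegree_le x).subset fun N hN => ⟨hN.1, hN.2.1⟩)]
  refine card_le_rpow_of_rankinAdmissible hadm (D := ⌊L + logb (Fintype.card F) L⌋₊) ?_ ?_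
    fun N hN => ?_
  · rw [hKL, rpow_logb (by linarith) hQ.ne' (by positivity)]
  · rw [hKL]
    exact Nat.floor_le (by linarith [logb_nonneg hQ hL])
  · obtain ⟨hmonic, hdeg, hsmooth⟩ := Set.Finite.mem_toFinset _ |>.1 hN
    refine ⟨hmonic, hdeg, fun P hP => Nat.le_floor ?_⟩
    exact (Nat.cast_le.2 (natDegree_le_pPlus_of_mem_normalizedFactors hmonic.ne_zero hP)).trans
      hsmooth
end
end

section
/- For every integer x ≥ 0, Σ_{N monic, deg N ≤ x} 2^{ω(N)}/|N| = ((q−1)x² + (3q+1)x + 2q)/(2q), where the sum is over monic polynomials N ∈ F_q[x]. -/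
/-!
`2 ^ ω(N)` counts the squarefree monic divisors `d` of `N`; writing `N = d * m` gives
`∑_{deg N = n} 2 ^ ω(N) = ∑_k s_k q ^ (n - k)`, where `s_k` is the number of squarefree monic
polynomials of degree `k`. Every monic polynomial is uniquely `b ^ 2 * a` with `a` squarefree,
so `∑_j s_(n - 2j) q ^ j = q ^ n`; hence `s_0 = 1`, `s_1 = q` and `s_k = q ^ k - q ^ (k - 1)` for
`k ≥ 2`. The degree-`n` part of the sum is therefore `(n (q - 1) + q + 1) / q` for `n ≥ 1`
(and `1` for `n = 0`), and summing over `n ≤ x` gives the formula.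
-/

open Polynomial

noncomputable section

variable {F : Type*}

/-- `ω(N)`: the number of distinct monic irreducible divisors of `N`. -/
def polyOmega [Field F] (N : Polynomial F) : ℕ :=
  {P : Polynomial F | P.Monic ∧ Irreducible P ∧ P ∣ N}.ncard

open UniqueFactorizationMonoid Finset
open scoped Classical

section Factorization

variable [Field F]

theorem monic_of_mem_normalizedFactors {p N : F[X]} (hp : p ∈ normalizedFactors N) :
    p.Monic := by
  rw [← normalize_normalized_factor p hp]
  exact monic_normalize (prime_of_normalized_factor p hp).ne_zero

theorem prod_normalizedFactors_of_monic {N : F[X]} (hN : N.Monic) :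
    (normalizedFactors N).prod = N := by
  rw [prod_normalizedFactors_eq hN.ne_zero, (normalize_eq_self_iff_monic hN.ne_zero).2 hN]

theorem polyOmega_eq_card_normalizedFactors {N : F[X]} (hN : N ≠ 0) :
    polyOmega N = #(normalizedFactors N).toFinset := by
  rw [polyOmega, ← Set.ncard_coe_finset]
  congr 1
  ext P
  simp only [Set.mem_ofPred_eq, mem_coe, Multiset.mem_toFinset,
    Polynomial.mem_normalizedFactors_iff hN]
  tauto

def squarefreeMonicDivisors (N : F[X]) : Finset F[X] :=
  (normalizedFactors N).toFinset.powerset.image fun s => ∏ p ∈ s, p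

theorem normalizedFactors_prod_of_subset {N : F[X]} {s : Finset F[X]}
    (hs : s ⊆ (normalizedFactors N).toFinset) :
    normalizedFactors (∏ p ∈ s, p) = s.val := by
  have hmem : ∀ p ∈ s.val, p ∈ normalizedFactors N := fun p hp =>
    Multiset.mem_toFinset.mp (hs hp)
  rw [prod_eq_multiset_prod, Multiset.map_id',
    normalizedFactors_prod_eq s.val fun p hp => irreducible_of_normalized_factor p (hmem p hp),
    Multiset.map_congr rfl fun p hp => normalize_normalized_factor p (hmem p hp), Multiset.map_id']

theorem mem_squarefreeMonicDivisors {N d : F[X]} (hN : N ≠ 0) :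
    d ∈ squarefreeMonicDivisors N ↔ d.Monic ∧ Squarefree d ∧ d ∣ N := by
  constructor
  · rintro hd
    obtain ⟨s, hs, rfl⟩ := mem_image.mp hd
    rw [mem_powerset] at hs
    have hmonic : (∏ p ∈ s, p).Monic := monic_prod_of_monic _ _ fun p hp =>
      monic_of_mem_normalizedFactors (Multiset.mem_toFinset.mp (hs hp))
    rw [squarefree_iff_nodup_normalizedFactors hmonic.ne_zero,
      dvd_iff_normalizedFactors_le_normalizedFactors hmonic.ne_zero hN,
      normalizedFactors_prod_of_subset hs, Multiset.le_iff_subset s.nodup]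
    exact ⟨hmonic, s.nodup, fun p hp => Multiset.mem_toFinset.mp (hs hp)⟩
  · rintro ⟨hm, hsq, hdvd⟩
    rw [squarefree_iff_nodup_normalizedFactors hm.ne_zero] at hsq
    rw [dvd_iff_normalizedFactors_le_normalizedFactors hm.ne_zero hN] at hdvd
    refine mem_image.mpr ⟨(normalizedFactors d).toFinset, ?_, ?_⟩
    · exact mem_powerset.mpr (Multiset.toFinset_subset.mpr (Multiset.subset_of_le hdvd))
    · rw [prod_eq_multiset_prod, Multiset.toFinset_val, Multiset.dedup_eq_self.mpr hsq,
        Multiset.map_id', prod_normalizedFactors_of_monic hm]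

theorem card_squarefreeMonicDivisors {N : F[X]} (hN : N ≠ 0) :
    #(squarefreeMonicDivisors N) = 2 ^ polyOmega N := by
  rw [squarefreeMonicDivisors, card_image_of_injOn, card_powerset,
    polyOmega_eq_card_normalizedFactors hN]
  intro s hs t ht hst
  rw [mem_coe, mem_powerset] at hs ht
  apply val_injective
  rw [← normalizedFactors_prod_of_subset hs, ← normalizedFactors_prod_of_subset ht]
  exact congrArg normalizedFactors hst

theorem exists_sq_mul_squarefree_of_monic {N : F[X]} (hN : N.Monic) :
    ∃ a b : F[X], a.Monic ∧ b.Monic ∧ Squarefree a ∧ b ^ 2 * a = N := by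
  induction h : N.natDegree using Nat.strong_induction_on generalizing N with
  | _ n ih =>
    by_cases hsq : Squarefree N
    · exact ⟨N, 1, hN, monic_one, hsq, by ring⟩
    rw [squarefree_iff_irreducible_sq_not_dvd_of_ne_zero hN.ne_zero] at hsq
    push Not at hsq
    obtain ⟨p, hp, hpN⟩ := hsq
    set P := normalize p
    have hPm : P.Monic := monic_normalize hp.ne_zero
    obtain ⟨M, rfl⟩ : P * P ∣ N := (mul_dvd_mul (normalize_dvd_iff.mpr dvd_rfl)
      (normalize_dvd_iff.mpr dvd_rfl)).trans hpN
    have hMm : M.Monic := (hPm.mul hPm).of_mul_monic_left hN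
    have hPdeg : 0 < P.natDegree :=
      hPm.natDegree_pos.mpr ((associated_normalize p).irreducible hp).ne_one
    have hMdeg : M.natDegree < n := by
      rw [← h, (hPm.mul hPm).natDegree_mul hMm, hPm.natDegree_mul hPm]
      omega
    obtain ⟨a, b, ham, hbm, hasq, rfl⟩ := ih _ hMdeg hMm rfl
    exact ⟨a, P * b, ham, hPm.mul hbm, hasq, by ring⟩

theorem sq_mul_squarefree_unique {a₁ a₂ b₁ b₂ : F[X]} (ha₁ : a₁.Monic) (ha₂ : a₂.Monic)
    (hb₁ : b₁.Monic) (hb₂ : b₂.Monic) (hs₁ : Squarefree a₁) (hs₂ : Squarefree a₂)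
    (h : b₁ ^ 2 * a₁ = b₂ ^ 2 * a₂) : a₁ = a₂ ∧ b₁ = b₂ := by
  have hcount (a b : F[X]) (ha : a.Monic) (hb : b.Monic) (p : F[X]) :
      (normalizedFactors (b ^ 2 * a)).count p =
        2 * (normalizedFactors b).count p + (normalizedFactors a).count p := by
    rw [normalizedFactors_mul (pow_ne_zero 2 hb.ne_zero) ha.ne_zero, normalizedFactors_pow,
      Multiset.count_add, Multiset.count_nsmul]
  have hle (a : F[X]) (ha : a.Monic) (hs : Squarefree a) (p : F[X]) :
      (normalizedFactors a).count p ≤ 1 :=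
    Multiset.nodup_iff_count_le_one.mp ((squarefree_iff_nodup_normalizedFactors ha.ne_zero).mp hs) p
  have hboth (p : F[X]) :
      (normalizedFactors a₁).count p = (normalizedFactors a₂).count p ∧
        (normalizedFactors b₁).count p = (normalizedFactors b₂).count p := by
    have := hcount a₁ b₁ ha₁ hb₁ p
    rw [h, hcount a₂ b₂ ha₂ hb₂] at this
    have := hle a₁ ha₁ hs₁ p
    have := hle a₂ ha₂ hs₂ p
    omega
  constructor
  · rw [← prod_normalizedFactors_of_monic ha₁, ← prod_normalizedFactors_of_monic ha₂,
      Multiset.ext.mpr fun p => (hboth p).1]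
  · rw [← prod_normalizedFactors_of_monic hb₁, ← prod_normalizedFactors_of_monic hb₂,
      Multiset.ext.mpr fun p => (hboth p).2]

end Factorization

section FiniteField

variable (F) [Field F] [Fintype F]

def monicOfDegree (n : ℕ) : Finset F[X] :=
  univ.image fun c : Fin n → F => X ^ n + ((degreeLTEquiv F n).symm c : F[X])

def squarefreeMonicOfDegree (n : ℕ) : Finset F[X] :=
  {p ∈ monicOfDegree F n | Squarefree p}

variable {F}

theorem mem_monicOfDegree {n : ℕ} {p : F[X]} :
    p ∈ monicOfDegree F n ↔ p.Monic ∧ p.natDegree = n := by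
  simp only [monicOfDegree, mem_image, mem_univ, true_and]
  constructor
  · rintro ⟨c, rfl⟩
    have hlt : degree ((degreeLTEquiv F n).symm c : F[X]) < n :=
      mem_degreeLT.mp ((degreeLTEquiv F n).symm c).2
    refine ⟨monic_X_pow_add hlt, ?_⟩
    rw [natDegree_add_eq_left_of_degree_lt (by rwa [degree_X_pow]), natDegree_X_pow]
  · rintro ⟨hm, rfl⟩
    have hlt : p - X ^ p.natDegree ∈ degreeLT F p.natDegree := by
      rw [mem_degreeLT]
      have := degree_sub_lt_left (by rw [degree_X_pow, degree_eq_natDegree hm.ne_zero]) hm.ne_zero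
        (by rw [hm.leadingCoeff, leadingCoeff_X_pow])
      rwa [degree_eq_natDegree hm.ne_zero] at this
    exact ⟨degreeLTEquiv F _ ⟨_, hlt⟩, by simp⟩

theorem card_monicOfDegree (n : ℕ) : #(monicOfDegree F n) = Fintype.card F ^ n := by
  rw [monicOfDegree, card_image_of_injective, card_univ, Fintype.card_fun, Fintype.card_fin]
  intro c c' h
  exact (degreeLTEquiv F n).symm.injective (Subtype.val_injective (add_left_cancel h))

theorem mem_squarefreeMonicOfDegree {n : ℕ} {p : F[X]} :
    p ∈ squarefreeMonicOfDegree F n ↔ p.Monic ∧ p.natDegree = n ∧ Squarefree p := by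
  rw [squarefreeMonicOfDegree, mem_filter, mem_monicOfDegree, and_assoc]

theorem card_squarefreeMonicOfDegree_zero : #(squarefreeMonicOfDegree F 0) = 1 := by
  rw [card_eq_one]
  refine ⟨1, eq_singleton_iff_unique_mem.mpr ⟨?_, fun p hp => ?_⟩⟩
  · exact mem_squarefreeMonicOfDegree.mpr ⟨monic_one, natDegree_one, squarefree_one⟩
  · obtain ⟨hm, hdeg, -⟩ := mem_squarefreeMonicOfDegree.mp hp
    exact hm.natDegree_eq_zero.mp hdeg

theorem card_squarefreeMonicOfDegree_one :
    #(squarefreeMonicOfDegree F 1) = Fintype.card F := by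
  rw [← pow_one (Fintype.card F), ← card_monicOfDegree, squarefreeMonicOfDegree,
    filter_true_of_mem]
  intro p hp
  obtain ⟨hm, hdeg⟩ := mem_monicOfDegree.mp hp
  exact (irreducible_of_degree_eq_one ((degree_eq_iff_natDegree_eq hm.ne_zero).mpr hdeg)).squarefree

theorem sum_card_squarefreeMonicOfDegree_mul_pow (n : ℕ) :
    ∑ j ∈ range (n / 2 + 1), #(squarefreeMonicOfDegree F (n - 2 * j)) * Fintype.card F ^ j =
      Fintype.card F ^ n := by
  simp_rw [← card_monicOfDegree, ← card_product, ← card_sigma]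
  refine card_bij (fun x _ => x.2.2 ^ 2 * x.2.1) ?_ ?_ ?_
  · rintro ⟨j, a, b⟩ hx
    simp only [mem_sigma, mem_product, mem_squarefreeMonicOfDegree, mem_monicOfDegree,
      mem_range] at hx ⊢
    obtain ⟨hj, ⟨ham, had, -⟩, hbm, hbd⟩ := hx
    refine ⟨(hbm.pow 2).mul ham, ?_⟩
    rw [(hbm.pow 2).natDegree_mul ham, hbm.natDegree_pow, hbd, had]
    omega
  · rintro ⟨j, a, b⟩ hx ⟨j', a', b'⟩ hx' h
    simp only [mem_sigma, mem_product, mem_squarefreeMonicOfDegree, mem_monicOfDegree] at hx hx'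
    obtain ⟨-, ⟨ham, -, has⟩, hbm, rfl⟩ := hx
    obtain ⟨-, ⟨ham', -, has'⟩, hbm', rfl⟩ := hx'
    obtain ⟨rfl, rfl⟩ := sq_mul_squarefree_unique ham ham' hbm hbm' has has' h
    rfl
  · intro N hN
    obtain ⟨hNm, rfl⟩ := mem_monicOfDegree.mp hN
    obtain ⟨a, b, ham, hbm, has, rfl⟩ := exists_sq_mul_squarefree_of_monic hNm
    have hdeg : (b ^ 2 * a).natDegree = 2 * b.natDegree + a.natDegree := by
      rw [(hbm.pow 2).natDegree_mul ham, hbm.natDegree_pow]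
    refine ⟨⟨b.natDegree, a, b⟩, ?_, rfl⟩
    simp only [mem_sigma, mem_product, mem_squarefreeMonicOfDegree, mem_monicOfDegree,
      mem_range]
    exact ⟨by omega, ⟨ham, by omega, has⟩, hbm, trivial⟩

theorem card_squarefreeMonicOfDegree_add_pow {n : ℕ} (hn : 2 ≤ n) :
    #(squarefreeMonicOfDegree F n) + Fintype.card F ^ (n - 1) = Fintype.card F ^ n := by
  obtain ⟨m, rfl⟩ := Nat.exists_eq_add_of_le' hn
  have h := sum_card_squarefreeMonicOfDegree_mul_pow (F := F) (m + 2)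
  rw [sum_range_succ', Nat.add_div_right m two_pos] at h
  -- the terms with `j ≥ 1` are `q` times the identity in degree `m`
  have htail : ∑ j ∈ range (m / 2 + 1),
      #(squarefreeMonicOfDegree F (m + 2 - 2 * (j + 1))) * Fintype.card F ^ (j + 1) =
        Fintype.card F ^ (m + 1) := by
    rw [pow_succ, ← sum_card_squarefreeMonicOfDegree_mul_pow m, sum_mul]
    refine sum_congr rfl fun j _ => ?_
    rw [show m + 2 - 2 * (j + 1) = m - 2 * j by omega, pow_succ, mul_assoc]
  rw [htail] at h
  simpa [add_comm] using h

theorem sum_card_squarefreeMonicDivisors (n : ℕ) :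
    ∑ N ∈ monicOfDegree F n, #(squarefreeMonicDivisors N) =
      ∑ k ∈ range (n + 1), #(squarefreeMonicOfDegree F k) * Fintype.card F ^ (n - k) := by
  simp_rw [← card_monicOfDegree, ← card_product, ← card_sigma]
  refine card_bij (fun x _ => ⟨x.2.natDegree, x.2, x.1 / x.2⟩) ?_ ?_ ?_
  · rintro ⟨N, d⟩ hx
    simp only [mem_sigma, mem_monicOfDegree] at hx
    obtain ⟨⟨hNm, rfl⟩, hd⟩ := hx
    obtain ⟨hdm, hds, ⟨m, rfl⟩⟩ := (mem_squarefreeMonicDivisors hNm.ne_zero).mp hd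
    have hmm : m.Monic := hdm.of_mul_monic_left hNm
    simp only [mem_sigma, mem_range, mem_product, mem_squarefreeMonicOfDegree, mem_monicOfDegree,
      mul_div_cancel_left₀ m hdm.ne_zero, hdm.natDegree_mul hmm]
    exact ⟨by omega, ⟨hdm, trivial, hds⟩, hmm, by omega⟩
  · rintro ⟨N, d⟩ hx ⟨N', d'⟩ hx' h
    simp only [mem_sigma, mem_monicOfDegree] at hx hx'
    obtain ⟨-, hd, hdN⟩ := (mem_squarefreeMonicDivisors hx.1.1.ne_zero).mp hx.2
    obtain ⟨-, hd', hdN'⟩ := (mem_squarefreeMonicDivisors hx'.1.1.ne_zero).mp hx'.2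
    simp only [Sigma.mk.injEq, heq_eq_eq, Prod.mk.injEq] at h
    obtain ⟨-, rfl, hquot⟩ := h
    rw [← EuclideanDomain.mul_div_cancel' hd.ne_zero hdN,
      ← EuclideanDomain.mul_div_cancel' hd.ne_zero hdN', hquot]
  · rintro ⟨k, d, m⟩ hx
    simp only [mem_sigma, mem_range, mem_product, mem_squarefreeMonicOfDegree,
      mem_monicOfDegree] at hx
    obtain ⟨hk, ⟨hdm, rfl, hds⟩, hmm, hmdeg⟩ := hx
    refine ⟨⟨d * m, d⟩, ?_, by simp [mul_div_cancel_left₀ m hdm.ne_zero]⟩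
    simp only [mem_sigma, mem_monicOfDegree, mem_squarefreeMonicDivisors (hdm.mul hmm).ne_zero,
      hdm.natDegree_mul hmm]
    exact ⟨⟨hdm.mul hmm, by omega⟩, hdm, hds, dvd_mul_right d m⟩

end FiniteField

section Density

variable [Field F] [Fintype F]

theorem sum_two_pow_polyOmega_div_monicOfDegree (n : ℕ) :
    ∑ N ∈ monicOfDegree F n, (2 : ℝ) ^ polyOmega N / (Fintype.card F : ℝ) ^ N.natDegree =
      ∑ k ∈ range (n + 1), (#(squarefreeMonicOfDegree F k) : ℝ) / (Fintype.card F : ℝ) ^ k := by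
  have hq : (Fintype.card F : ℝ) ≠ 0 := by exact_mod_cast Fintype.card_ne_zero
  have hterm : ∀ N ∈ monicOfDegree F n, (2 : ℝ) ^ polyOmega N / (Fintype.card F : ℝ) ^ N.natDegree
      = (#(squarefreeMonicDivisors N) : ℝ) / (Fintype.card F : ℝ) ^ n := by
    intro N hN
    obtain ⟨hNm, rfl⟩ := mem_monicOfDegree.mp hN
    rw [card_squarefreeMonicDivisors hNm.ne_zero]
    push_cast
    rfl
  rw [sum_congr rfl hterm, ← sum_div, ← Nat.cast_sum, sum_card_squarefreeMonicDivisors,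
    Nat.cast_sum, sum_div]
  refine sum_congr rfl fun k hk => ?_
  rw [div_eq_div_iff (pow_ne_zero _ hq) (pow_ne_zero _ hq), Nat.cast_mul, Nat.cast_pow, mul_assoc,
    ← pow_add, Nat.sub_add_cancel (Nat.lt_succ_iff.mp (mem_range.mp hk))]

theorem sum_range_card_squarefreeMonicOfDegree_div {n : ℕ} (hn : 1 ≤ n) :
    ∑ k ∈ range (n + 1), (#(squarefreeMonicOfDegree F k) : ℝ) / (Fintype.card F : ℝ) ^ k =
      (n * ((Fintype.card F : ℝ) - 1) + Fintype.card F + 1) / Fintype.card F := by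
  have hq : (Fintype.card F : ℝ) ≠ 0 := by exact_mod_cast Fintype.card_ne_zero
  induction n, hn using Nat.le_induction with
  | base =>
    rw [sum_range_succ, sum_range_one, card_squarefreeMonicOfDegree_zero,
      card_squarefreeMonicOfDegree_one]
    field_simp
    ring
  | succ n hn ih =>
    have hcard := card_squarefreeMonicOfDegree_add_pow (F := F) (n := n + 1) (by omega)
    rw [Nat.add_sub_cancel] at hcard
    have hcard' : (#(squarefreeMonicOfDegree F (n + 1)) : ℝ) =
        (Fintype.card F : ℝ) ^ (n + 1) - (Fintype.card F : ℝ) ^ n := by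
      rw [eq_sub_iff_add_eq]
      exact_mod_cast hcard
    rw [sum_range_succ, ih, hcard']
    field_simp
    push_cast
    ring

theorem sum_range_sum_two_pow_polyOmega_div (x : ℕ) :
    ∑ n ∈ range (x + 1), ∑ N ∈ monicOfDegree F n,
        (2 : ℝ) ^ polyOmega N / (Fintype.card F : ℝ) ^ N.natDegree =
      (((Fintype.card F : ℝ) - 1) * (x : ℝ) ^ 2 + (3 * (Fintype.card F : ℝ) + 1) * (x : ℝ)
        + 2 * Fintype.card F) / (2 * Fintype.card F) := by
  have hq : (Fintype.card F : ℝ) ≠ 0 := by exact_mod_cast Fintype.card_ne_zero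
  simp_rw [sum_two_pow_polyOmega_div_monicOfDegree]
  induction x with
  | zero =>
    simp only [zero_add, sum_range_one, card_squarefreeMonicOfDegree_zero]
    field_simp
    ring
  | succ x ih =>
    rw [sum_range_succ, ih, sum_range_card_squarefreeMonicOfDegree_div (Nat.succ_pos x)]
    field_simp
    push_cast
    ring

end Density

/-- For every integer `x ≥ 0`,
`Σ_{N monic, deg N ≤ x} 2^{ω(N)}/|N| = ((q-1)x² + (3q+1)x + 2q)/(2q)`. -/
theorem sum_two_pow_omega
    (F : Type*) [Field F] [Fintype F] (q : ℕ) (hq : Fintype.card F = q) (x : ℕ) :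
    ∑ᶠ N ∈ {N : Polynomial F | N.Monic ∧ N.natDegree ≤ x},
      (2 : ℝ) ^ polyOmega N / (q : ℝ) ^ N.natDegree =
      (((q : ℝ) - 1) * (x : ℝ) ^ 2 + (3 * (q : ℝ) + 1) * (x : ℝ) + 2 * q) / (2 * q) := by
  subst hq
  have hset : {N : F[X] | N.Monic ∧ N.natDegree ≤ x} =
      ↑((range (x + 1)).biUnion (monicOfDegree F)) := by
    ext N
    simp [mem_monicOfDegree]
  have hdisj : (range (x + 1) : Set ℕ).PairwiseDisjoint (monicOfDegree F) := by
    intro m _ n _ hmn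
    refine disjoint_left.mpr fun N hm hn => hmn ?_
    rw [← (mem_monicOfDegree.mp hm).2, (mem_monicOfDegree.mp hn).2]
  rw [hset, finsum_mem_coe_finset, sum_biUnion hdisj]
  exact sum_range_sum_two_pow_polyOmega_div x
end
end

section
/- For positive integers 𝔇, Σ |ABCD|^{−1/2} = ((q−1)/(48q))·𝔇⁴ + O(𝔇³), where the sum is over quadruples (A,B,C,D) of monic polynomials in F_q[x] satisfying deg(AB) < 𝔇, deg(CD) < 𝔇 and AC = BD, and the implied constant depends only on q. -/
/-!
Write `A = GA'`, `B = GB'` with `G = gcd(A, B)` and `A'`, `B'` coprime; then `AC = BD` forces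
`C = B'E`, `D = A'E`, and `(A, B, C, D) ↦ (G, A', B', E)` is a bijection onto the monic
quadruples with `A'`, `B'` coprime and `2g + a + b < 𝔇`, `a + b + 2e < 𝔇` (lowercase letters
are degrees). Since `|ABCD|^{1/2} = q^{g+a+b+e}`, summing over `G` and `E` of fixed degrees
cancels their weight, and the number of coprime monic pairs of degrees `(a, b)` is
`q^{a+b}(1 - 1/q)` unless `a` or `b` vanishes. The sum is thus `(1 - 1/q)` times the number of
lattice points `(g, a, b, e)`, which is `𝔇⁴/48 + O(𝔇³)`, plus `O(𝔇³)` from the boundary `ab = 0`.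
-/

open Polynomial Finset

noncomputable section

namespace DiagonalSum

section MonicOfDegree

variable (R : Type*) [Ring R] [Fintype R]

def monicOfDegree (n : ℕ) : Finset R[X] :=
  univ.map <| ((degreeLTEquiv R n).symm.toEquiv.toEmbedding.trans
    (Function.Embedding.subtype _)).trans (addLeftEmbedding (X ^ n))

theorem card_monicOfDegree (n : ℕ) : #(monicOfDegree R n) = Fintype.card R ^ n := by
  simp [monicOfDegree]

variable {R} [Nontrivial R]

theorem mem_monicOfDegree {n : ℕ} {P : R[X]} :
    P ∈ monicOfDegree R n ↔ P.Monic ∧ P.natDegree = n := by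
  simp only [monicOfDegree, mem_map, mem_univ, true_and, Function.Embedding.trans_apply,
    addLeftEmbedding_apply, Function.Embedding.subtype_apply, Equiv.toEmbedding_apply,
    LinearEquiv.coe_toEquiv]
  constructor
  · rintro ⟨c, rfl⟩
    have hc := mem_degreeLT.1 ((degreeLTEquiv R n).symm c).2
    refine ⟨monic_X_pow_add hc, ?_⟩
    rw [natDegree_add_eq_left_of_degree_lt (by rwa [degree_X_pow]), natDegree_X_pow]
  · rintro ⟨hP, rfl⟩
    have hdeg : (P - X ^ P.natDegree).degree < (P.natDegree : WithBot ℕ) := by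
      simpa using degree_sub_lt_right (p := P)
        (by rw [degree_X_pow, degree_eq_natDegree hP.ne_zero]) (monic_X_pow _).ne_zero
        (by rw [hP.leadingCoeff, leadingCoeff_X_pow])
    exact ⟨degreeLTEquiv R _ ⟨_, mem_degreeLT.2 hdeg⟩, by simp⟩

end MonicOfDegree

section Coprime

variable {F : Type*} [Field F]

theorem exists_eq_mul_isCoprime_of_monic {A B : F[X]} (hA : A.Monic) (hB : B.Monic) :
    ∃ G A' B' : F[X], G.Monic ∧ A'.Monic ∧ B'.Monic ∧ IsCoprime A' B' ∧
      A = G * A' ∧ B = G * B' := by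
  classical
  obtain ⟨A', B', hA', hB', hu⟩ := extract_gcd A B
  have hG : (gcd A B).Monic := by
    rw [← _root_.normalize_gcd]
    exact monic_normalize fun h => hA.ne_zero ((gcd_eq_zero_iff _ _).1 h).1
  exact ⟨gcd A B, A', B', hG, hG.of_mul_monic_left (hA' ▸ hA), hG.of_mul_monic_left (hB' ▸ hB),
    isRelPrime_iff_isCoprime.1 (gcd_isUnit_iff_isRelPrime.1 hu), hA', hB'⟩

theorem eq_of_mul_eq_mul_of_isCoprime {G A' B' H A'' B'' : F[X]}
    (hG : G.Monic) (hA' : A'.Monic) (hA'' : A''.Monic)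
    (hc : IsCoprime A' B') (hc' : IsCoprime A'' B'')
    (hA : G * A' = H * A'') (hB : G * B' = H * B'') :
    G = H ∧ A' = A'' ∧ B' = B'' := by
  have hcross : A' * B'' = A'' * B' :=
    mul_left_cancel₀ hG.ne_zero (by linear_combination B'' * hA - A'' * hB)
  have hAA : A' = A'' := eq_of_monic_of_associated hA' hA'' <| associated_of_dvd_dvd
    (hc.dvd_of_dvd_mul_right ⟨B'', hcross.symm⟩) (hc'.dvd_of_dvd_mul_right ⟨B', hcross⟩)
  subst hAA
  obtain rfl : G = H := mul_right_cancel₀ hA'.ne_zero hA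
  exact ⟨rfl, rfl, mul_left_cancel₀ hG.ne_zero hB⟩

end Coprime

section CoprimePairs

variable (F : Type*) [Field F] [Fintype F]

open scoped Classical in
def coprimePairs (m n : ℕ) : Finset (F[X] × F[X]) :=
  (monicOfDegree F m ×ˢ monicOfDegree F n).filter fun p => IsCoprime p.1 p.2

variable {F}

theorem mem_coprimePairs {m n : ℕ} {p : F[X] × F[X]} :
    p ∈ coprimePairs F m n ↔
      (p.1.Monic ∧ p.1.natDegree = m) ∧ (p.2.Monic ∧ p.2.natDegree = n) ∧ IsCoprime p.1 p.2 := by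
  simp only [coprimePairs, mem_filter, mem_product, mem_monicOfDegree, and_assoc]

theorem sum_pow_mul_card_coprimePairs (m n : ℕ) :
    ∑ g ∈ range (min m n + 1), Fintype.card F ^ g * #(coprimePairs F (m - g) (n - g)) =
      Fintype.card F ^ (m + n) := by
  rw [pow_add, ← card_monicOfDegree, ← card_monicOfDegree, ← card_product]
  simp only [← card_monicOfDegree, ← card_product, ← card_sigma]
  refine card_bij (fun x _ => (x.2.1 * x.2.2.1, x.2.1 * x.2.2.2)) ?_ ?_ ?_
  · rintro ⟨g, G, A', B'⟩ hx
    simp only [mem_sigma, mem_range, mem_product, mem_monicOfDegree, mem_coprimePairs] at hx ⊢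
    obtain ⟨hg, ⟨hG, rfl⟩, ⟨hA', hA'd⟩, ⟨hB', hB'd⟩, -⟩ := hx
    exact ⟨⟨hG.mul hA', by rw [hG.natDegree_mul hA']; omega⟩,
      hG.mul hB', by rw [hG.natDegree_mul hB']; omega⟩
  · rintro ⟨g, G, A', B'⟩ hx ⟨g', H, A'', B''⟩ hy h
    simp only [mem_sigma, mem_range, mem_product, mem_monicOfDegree, mem_coprimePairs] at hx hy
    simp only [Prod.mk.injEq] at h
    obtain ⟨rfl, rfl, rfl⟩ := eq_of_mul_eq_mul_of_isCoprime hx.2.1.1 hx.2.2.1.1 hy.2.2.1.1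
      hx.2.2.2.2 hy.2.2.2.2 h.1 h.2
    obtain rfl : g = g' := hx.2.1.2.symm.trans hy.2.1.2
    rfl
  · rintro ⟨A, B⟩ hAB
    simp only [mem_product, mem_monicOfDegree] at hAB
    obtain ⟨⟨hA, rfl⟩, hB, rfl⟩ := hAB
    obtain ⟨G, A', B', hG, hA', hB', hcop, rfl, rfl⟩ := exists_eq_mul_isCoprime_of_monic hA hB
    refine ⟨⟨G.natDegree, G, A', B'⟩, ?_, rfl⟩
    simp only [mem_sigma, mem_range, mem_product, mem_monicOfDegree, mem_coprimePairs,
      hG.natDegree_mul hA', hG.natDegree_mul hB']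
    exact ⟨by omega, ⟨hG, trivial⟩, ⟨hA', by omega⟩, ⟨hB', by omega⟩, hcop⟩

theorem card_coprimePairs_of_eq_zero {m n : ℕ} (h : m = 0 ∨ n = 0) :
    #(coprimePairs F m n) = Fintype.card F ^ (m + n) := by
  simpa [show min m n = 0 by omega] using sum_pow_mul_card_coprimePairs (F := F) m n

theorem card_coprimePairs_add_pow {m n : ℕ} (hm : m ≠ 0) (hn : n ≠ 0) :
    #(coprimePairs F m n) + Fintype.card F ^ (m + n - 1) = Fintype.card F ^ (m + n) := by
  have hsum := sum_pow_mul_card_coprimePairs (F := F) m n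
  rw [show min m n = min (m - 1) (n - 1) + 1 by omega, sum_range_succ'] at hsum
  have hshift : ∀ g ∈ range (min (m - 1) (n - 1) + 1),
      Fintype.card F ^ (g + 1) * #(coprimePairs F (m - (g + 1)) (n - (g + 1))) =
        Fintype.card F * (Fintype.card F ^ g * #(coprimePairs F (m - 1 - g) (n - 1 - g))) := by
    intro g _
    rw [pow_succ, Nat.sub_sub, Nat.sub_sub, add_comm 1 g, mul_assoc, mul_left_comm]
  rw [sum_congr rfl hshift, ← mul_sum, sum_pow_mul_card_coprimePairs, ← pow_succ',
    show m - 1 + (n - 1) + 1 = m + n - 1 by omega] at hsum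
  simpa [add_comm] using hsum

theorem card_coprimePairs_div_pow (m n : ℕ) :
    (#(coprimePairs F m n) : ℝ) / (Fintype.card F : ℝ) ^ (m + n) =
      1 - 1 / (Fintype.card F : ℝ) + if m = 0 ∨ n = 0 then 1 / (Fintype.card F : ℝ) else 0 := by
  have hq : (Fintype.card F : ℝ) ≠ 0 := by exact_mod_cast Fintype.card_ne_zero
  split_ifs with h
  · rw [card_coprimePairs_of_eq_zero h]
    push_cast
    field_simp
    ring
  · have hcard : (#(coprimePairs F m n) : ℝ) + (Fintype.card F : ℝ) ^ (m + n - 1) =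
        (Fintype.card F : ℝ) ^ (m + n) := by
      exact_mod_cast card_coprimePairs_add_pow (by omega) (by omega)
    obtain ⟨k, hk⟩ : ∃ k, m + n = k + 1 := ⟨m + n - 1, by omega⟩
    rw [hk, Nat.add_sub_cancel] at hcard
    rw [hk, eq_sub_of_add_eq hcard]
    field_simp
    ring

end CoprimePairs

section Quadruples

variable {F : Type*} [Field F]

def quadrupleOf (x : F[X] × (F[X] × F[X]) × F[X]) : F[X] × F[X] × F[X] × F[X] :=
  (x.1 * x.2.1.1, x.1 * x.2.1.2, x.2.1.2 * x.2.2, x.2.1.1 * x.2.2)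

theorem exists_factorization_of_mul_eq_mul {A B C D : F[X]} (hA : A.Monic) (hB : B.Monic)
    (hC : C.Monic) (h : A * C = B * D) :
    ∃ G A' B' E : F[X], G.Monic ∧ A'.Monic ∧ B'.Monic ∧ IsCoprime A' B' ∧ E.Monic ∧
      A = G * A' ∧ B = G * B' ∧ C = B' * E ∧ D = A' * E := by
  obtain ⟨G, A', B', hG, hA', hB', hcop, rfl, rfl⟩ := exists_eq_mul_isCoprime_of_monic hA hB
  have h' : A' * C = B' * D := mul_left_cancel₀ hG.ne_zero (by linear_combination h)
  obtain ⟨E, rfl⟩ : B' ∣ C := hcop.symm.dvd_of_dvd_mul_left ⟨D, h'⟩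
  have hD : D = A' * E := mul_left_cancel₀ hB'.ne_zero (by linear_combination -h')
  exact ⟨G, A', B', E, hG, hA', hB', hcop, hB'.of_mul_monic_left hC, rfl, rfl, rfl, hD⟩

theorem injOn_quadrupleOf :
    Set.InjOn (quadrupleOf (F := F))
      {x | x.1.Monic ∧ x.2.1.1.Monic ∧ x.2.1.2.Monic ∧ IsCoprime x.2.1.1 x.2.1.2} := by
  rintro ⟨G, ⟨A', B'⟩, E⟩ ⟨hG, hA', hB', hcop⟩ ⟨H, ⟨A'', B''⟩, E'⟩ ⟨-, hA'', -, hcop'⟩ h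
  simp only [quadrupleOf, Prod.mk.injEq] at h
  obtain ⟨rfl, rfl, rfl⟩ := eq_of_mul_eq_mul_of_isCoprime hG hA' hA'' hcop hcop' h.1 h.2.1
  rw [mul_left_cancel₀ hB'.ne_zero h.2.2.1]

/-- `|ABCD|^{-1/2}` in the notation `|N| = q ^ deg N`. -/
def weight (q : ℝ) (t : F[X] × F[X] × F[X] × F[X]) : ℝ :=
  (Real.sqrt (q ^ (t.1 * t.2.1 * t.2.2.1 * t.2.2.2).natDegree))⁻¹

theorem weight_quadrupleOf {q : ℝ} (hq : 0 ≤ q) {x : F[X] × (F[X] × F[X]) × F[X]}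
    (hG : x.1.Monic) (hA' : x.2.1.1.Monic) (hB' : x.2.1.2.Monic) (hE : x.2.2.Monic) :
    weight q (quadrupleOf x) =
      (q ^ (x.1.natDegree + x.2.1.1.natDegree + x.2.1.2.natDegree + x.2.2.natDegree))⁻¹ := by
  have hdeg : (quadrupleOf x).1 * (quadrupleOf x).2.1 * (quadrupleOf x).2.2.1 *
      (quadrupleOf x).2.2.2 = (x.1 * x.2.1.1 * x.2.1.2 * x.2.2) ^ 2 := by
    simp only [quadrupleOf]; ring
  rw [weight, hdeg, natDegree_pow, mul_comm, pow_mul, Real.sqrt_sq (by positivity)]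
  simp only [natDegree_mul, hG.ne_zero, hA'.ne_zero, hB'.ne_zero, hE.ne_zero, ne_eq,
    mul_eq_zero, or_self, not_false_eq_true]

end Quadruples

section LatticeCount

/-- The degrees `(deg G, deg A', deg B', deg E)` allowed by `deg AB < 𝔇` and `deg CD < 𝔇`. -/
def degreeTuples (𝔇 : ℕ) : Finset (ℕ × ℕ × ℕ × ℕ) :=
  (range 𝔇 ×ˢ range 𝔇 ×ˢ range 𝔇 ×ˢ range 𝔇).filter fun k =>
    2 * k.1 + k.2.1 + k.2.2.1 < 𝔇 ∧ k.2.1 + k.2.2.1 + 2 * k.2.2.2 < 𝔇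

theorem mem_degreeTuples {𝔇 : ℕ} {k : ℕ × ℕ × ℕ × ℕ} :
    k ∈ degreeTuples 𝔇 ↔ 2 * k.1 + k.2.1 + k.2.2.1 < 𝔇 ∧ k.2.1 + k.2.2.1 + 2 * k.2.2.2 < 𝔇 := by
  simp only [degreeTuples, mem_filter, mem_product, mem_range]
  omega

theorem card_degreeTuples (𝔇 : ℕ) :
    #(degreeTuples 𝔇) = ∑ a ∈ range 𝔇, ∑ b ∈ range 𝔇, ((𝔇 - (a + b) + 1) / 2) ^ 2 := by
  have hhalf : ∀ s, #((range 𝔇).filter fun g => 2 * g + s < 𝔇) = (𝔇 - s + 1) / 2 := by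
    intro s
    rw [show (range 𝔇).filter (fun g => 2 * g + s < 𝔇) = range ((𝔇 - s + 1) / 2) by
      ext g; simp only [mem_filter, mem_range]; omega, card_range]
  simp only [degreeTuples, card_filter, sum_product, ite_and]
  rw [sum_comm]
  refine sum_congr rfl fun a _ => ?_
  rw [sum_comm]
  refine sum_congr rfl fun b _ => ?_
  rw [sq, ← hhalf, card_filter, sum_mul_sum]
  refine sum_congr rfl fun g _ => sum_congr rfl fun e _ => ?_
  by_cases h1 : 2 * g + a + b < 𝔇 <;> by_cases h2 : a + b + 2 * e < 𝔇 <;>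
    simp [h1, h2, show 2 * g + (a + b) < 𝔇 ↔ 2 * g + a + b < 𝔇 by omega] <;> omega

theorem sum_range_tsub_sq {n j : ℕ} (h : j ≤ n) :
    ∑ b ∈ range n, ((j - b : ℕ) : ℝ) ^ 2 = j * (j + 1) * (2 * j + 1) / 6 := by
  induction n generalizing j with
  | zero =>
    obtain rfl : j = 0 := by omega
    simp
  | succ n ih =>
    rcases j with _ | j
    · simp
    rw [sum_range_succ']
    simp only [Nat.add_sub_add_right, Nat.sub_zero]
    rw [ih (by omega)]
    push_cast
    ring

theorem sum_range_sum_range_tsub_sq (n : ℕ) :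
    ∑ a ∈ range n, ∑ b ∈ range n, ((n - (a + b) : ℕ) : ℝ) ^ 2 =
      n * (n + 1) ^ 2 * (n + 2) / 12 := by
  induction n with
  | zero => simp
  | succ n ih =>
    have hshift : ∀ a ∈ range n, ∑ b ∈ range (n + 1), ((n + 1 - (a + 1 + b) : ℕ) : ℝ) ^ 2 =
        ∑ b ∈ range n, ((n - (a + b) : ℕ) : ℝ) ^ 2 := by
      intro a _
      rw [sum_range_succ, show n + 1 - (a + 1 + n) = 0 by omega]
      simp [Nat.add_right_comm _ 1, Nat.add_sub_add_right]
    rw [sum_range_succ', sum_congr rfl hshift, ih]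
    simp only [zero_add]
    rw [sum_range_tsub_sq le_rfl]
    push_cast
    ring

theorem abs_card_degreeTuples_sub_le (𝔇 : ℕ) :
    |(#(degreeTuples 𝔇) : ℝ) - (𝔇 : ℝ) ^ 4 / 48| ≤ (𝔇 : ℝ) ^ 3 := by
  have hterm : ∀ s : ℕ, (((𝔇 - s : ℕ) : ℝ) ^ 2 / 4 ≤ (((𝔇 - s + 1) / 2 : ℕ) : ℝ) ^ 2) ∧
      (((𝔇 - s + 1) / 2 : ℕ) : ℝ) ^ 2 ≤ ((𝔇 - s : ℕ) : ℝ) ^ 2 / 4 + (2 * 𝔇 + 1) / 4 := by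
    intro s
    have h1 : ((𝔇 - s : ℕ) : ℝ) ≤ 2 * (((𝔇 - s + 1) / 2 : ℕ) : ℝ) := by exact_mod_cast (by omega)
    have h2 : 2 * (((𝔇 - s + 1) / 2 : ℕ) : ℝ) ≤ ((𝔇 - s : ℕ) : ℝ) + 1 := by
      exact_mod_cast (by omega)
    have h3 : ((𝔇 - s : ℕ) : ℝ) ≤ 𝔇 := by exact_mod_cast (by omega)
    constructor <;> nlinarith [Nat.cast_nonneg (α := ℝ) (𝔇 - s)]
  have hcard : (#(degreeTuples 𝔇) : ℝ) =
      ∑ a ∈ range 𝔇, ∑ b ∈ range 𝔇, (((𝔇 - (a + b) + 1) / 2 : ℕ) : ℝ) ^ 2 := by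
    rw [card_degreeTuples]; push_cast; rfl
  have hlower : (𝔇 : ℝ) * (𝔇 + 1) ^ 2 * (𝔇 + 2) / 12 / 4 ≤ #(degreeTuples 𝔇) := by
    rw [hcard, ← sum_range_sum_range_tsub_sq, sum_div]
    exact sum_le_sum fun a _ => by rw [sum_div]; exact sum_le_sum fun b _ => (hterm _).1
  have hupper : (#(degreeTuples 𝔇) : ℝ) ≤
      (𝔇 : ℝ) * (𝔇 + 1) ^ 2 * (𝔇 + 2) / 12 / 4 + 𝔇 * 𝔇 * ((2 * 𝔇 + 1) / 4) := by
    calc (#(degreeTuples 𝔇) : ℝ)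
        ≤ ∑ a ∈ range 𝔇, ∑ b ∈ range 𝔇, (((𝔇 - (a + b) : ℕ) : ℝ) ^ 2 / 4 + (2 * 𝔇 + 1) / 4) := by
          rw [hcard]
          exact sum_le_sum fun a _ => sum_le_sum fun b _ => (hterm _).2
      _ = _ := by
          simp only [sum_add_distrib, sum_const, card_range, nsmul_eq_mul, ← sum_div,
            sum_range_sum_range_tsub_sq]
          ring
  rcases Nat.eq_zero_or_pos 𝔇 with rfl | hD
  · simp [degreeTuples]
  have hD1 : (1 : ℝ) ≤ 𝔇 := by exact_mod_cast hD
  rw [abs_le]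
  constructor <;> nlinarith

theorem card_filter_degreeTuples_le (𝔇 : ℕ) :
    #((degreeTuples 𝔇).filter fun k => k.2.1 = 0 ∨ k.2.2.1 = 0) ≤ 2 * 𝔇 ^ 3 := by
  calc #((degreeTuples 𝔇).filter fun k => k.2.1 = 0 ∨ k.2.2.1 = 0)
      ≤ #((range 𝔇 ×ˢ {0} ×ˢ range 𝔇 ×ˢ range 𝔇) ∪ (range 𝔇 ×ˢ range 𝔇 ×ˢ {0} ×ˢ range 𝔇)) := by
        refine card_le_card fun k hk => ?_
        simp only [degreeTuples, mem_filter, mem_product, mem_range, mem_union,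
          mem_singleton] at hk ⊢
        omega
    _ ≤ 2 * 𝔇 ^ 3 := (card_union_le _ _).trans_eq <| by
        simp only [card_product, card_range, card_singleton]
        ring

end LatticeCount

section Parametrization

variable (F : Type*) [Field F] [Fintype F]

open scoped Classical in
def params (𝔇 : ℕ) : Finset (F[X] × (F[X] × F[X]) × F[X]) :=
  (degreeTuples 𝔇).biUnion fun k =>
    monicOfDegree F k.1 ×ˢ coprimePairs F k.2.1 k.2.2.1 ×ˢ monicOfDegree F k.2.2.2

variable {F}

theorem mem_params {𝔇 : ℕ} {x : F[X] × (F[X] × F[X]) × F[X]} :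
    x ∈ params F 𝔇 ↔
      (x.1.Monic ∧ x.2.1.1.Monic ∧ x.2.1.2.Monic ∧ IsCoprime x.2.1.1 x.2.1.2) ∧ x.2.2.Monic ∧
        2 * x.1.natDegree + x.2.1.1.natDegree + x.2.1.2.natDegree < 𝔇 ∧
        x.2.1.1.natDegree + x.2.1.2.natDegree + 2 * x.2.2.natDegree < 𝔇 := by
  obtain ⟨G, ⟨A', B'⟩, E⟩ := x
  simp only [params, mem_biUnion, mem_product, mem_monicOfDegree, mem_coprimePairs,
    mem_degreeTuples]
  constructor
  · rintro ⟨⟨g, a, b, e⟩, hk, ⟨hG, rfl⟩, ⟨⟨hA', rfl⟩, ⟨hB', rfl⟩, hcop⟩, hE, rfl⟩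
    exact ⟨⟨hG, hA', hB', hcop⟩, hE, hk⟩
  · rintro ⟨⟨hG, hA', hB', hcop⟩, hE, hk⟩
    exact ⟨(_, _, _, _), hk, ⟨hG, rfl⟩, ⟨⟨hA', rfl⟩, ⟨hB', rfl⟩, hcop⟩, hE, rfl⟩

theorem setOf_eq_image_params (𝔇 : ℕ) :
    {t : F[X] × F[X] × F[X] × F[X] | t.1.Monic ∧ t.2.1.Monic ∧ t.2.2.1.Monic ∧ t.2.2.2.Monic ∧
        (t.1 * t.2.1).natDegree < 𝔇 ∧ (t.2.2.1 * t.2.2.2).natDegree < 𝔇 ∧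
        t.1 * t.2.2.1 = t.2.1 * t.2.2.2} =
      quadrupleOf '' ↑(params F 𝔇) := by
  ext ⟨A, B, C, D⟩
  simp only [Set.mem_ofPred_eq, Set.mem_image, mem_coe, mem_params]
  constructor
  · rintro ⟨hA, hB, hC, -, hAB, hCD, h⟩
    obtain ⟨G, A', B', E, hG, hA', hB', hcop, hE, rfl, rfl, rfl, rfl⟩ :=
      exists_factorization_of_mul_eq_mul hA hB hC h
    simp only [natDegree_mul, hG.ne_zero, hA'.ne_zero, hB'.ne_zero, hE.ne_zero,
      ne_eq, mul_eq_zero, or_self, not_false_eq_true] at hAB hCD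
    exact ⟨(G, (A', B'), E), ⟨⟨hG, hA', hB', hcop⟩, hE, by dsimp only; omega,
      by dsimp only; omega⟩, rfl⟩
  · rintro ⟨⟨G, ⟨A', B'⟩, E⟩, ⟨⟨hG, hA', hB', hcop⟩, hE, hAB, hCD⟩, heq⟩
    simp only [quadrupleOf, Prod.mk.injEq] at heq
    obtain ⟨rfl, rfl, rfl, rfl⟩ := heq
    dsimp only at hAB hCD
    simp only [natDegree_mul, hG.ne_zero, hA'.ne_zero, hB'.ne_zero, hE.ne_zero,
      ne_eq, mul_eq_zero, or_self, not_false_eq_true]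
    exact ⟨hG.mul hA', hG.mul hB', hB'.mul hE, hA'.mul hE, by omega, by omega, by ring⟩

theorem sum_weight_params (𝔇 : ℕ) :
    ∑ x ∈ params F 𝔇, weight (Fintype.card F : ℝ) (quadrupleOf x) =
      ∑ k ∈ degreeTuples 𝔇,
        (#(coprimePairs F k.2.1 k.2.2.1) : ℝ) / (Fintype.card F : ℝ) ^ (k.2.1 + k.2.2.1) := by
  classical
  have hq : (Fintype.card F : ℝ) ≠ 0 := by exact_mod_cast Fintype.card_ne_zero
  rw [params, sum_biUnion]
  · refine sum_congr rfl fun ⟨g, a, b, e⟩ _ => ?_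
    rw [sum_congr rfl (g := fun _ => ((Fintype.card F : ℝ) ^ (g + a + b + e))⁻¹)]
    · simp only [sum_const, card_product, card_monicOfDegree, nsmul_eq_mul]
      push_cast
      field_simp
      ring
    rintro ⟨G, ⟨A', B'⟩, E⟩ hx
    simp only [mem_product, mem_monicOfDegree, mem_coprimePairs] at hx
    obtain ⟨⟨hG, rfl⟩, ⟨⟨hA', rfl⟩, ⟨hB', rfl⟩, -⟩, hE, rfl⟩ := hx
    exact weight_quadrupleOf (Nat.cast_nonneg _) hG hA' hB' hE
  · intro k _ k' _ hne
    refine disjoint_left.2 fun x hx hx' => hne ?_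
    simp only [mem_product, mem_monicOfDegree, mem_coprimePairs] at hx hx'
    ext <;> simp_all

end Parametrization

theorem abs_sum_degreeTuples_sub_le (q : ℝ) (hq : 1 ≤ q) (𝔇 : ℕ) :
    |∑ k ∈ degreeTuples 𝔇, (1 - 1 / q + if k.2.1 = 0 ∨ k.2.2.1 = 0 then 1 / q else 0) -
      (q - 1) / (48 * q) * (𝔇 : ℝ) ^ 4| ≤ 2 * (𝔇 : ℝ) ^ 3 := by
  rw [sum_add_distrib, sum_const, ← sum_filter, sum_const, nsmul_eq_mul, nsmul_eq_mul]
  have hT := abs_card_degreeTuples_sub_le 𝔇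
  have hE : (#((degreeTuples 𝔇).filter fun k => k.2.1 = 0 ∨ k.2.2.1 = 0) : ℝ) ≤
      2 * (𝔇 : ℝ) ^ 3 := by
    exact_mod_cast card_filter_degreeTuples_le 𝔇
  have h1q : 0 ≤ 1 - 1 / q := by rw [sub_nonneg, div_le_one (by linarith)]; exact hq
  have hq0 : 0 < 1 / q := by positivity
  have hcoeff : (q - 1) / (48 * q) = (1 - 1 / q) / 48 := by field_simp
  rw [hcoeff, abs_le]
  rw [abs_le] at hT
  constructor <;> nlinarith [mul_le_mul_of_nonneg_left hT.1 h1q, mul_le_mul_of_nonneg_left hT.2 h1q]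

end DiagonalSum

end

open DiagonalSum

/-- Diagonal sum: `Σ |ABCD|^{-1/2} = ((q-1)/(48q)) 𝔇⁴ + O(𝔇³)` over quadruples of monic
polynomials with `deg(AB) < 𝔇`, `deg(CD) < 𝔇` and `AC = BD`, the implied constant
depending only on `q`. -/
theorem diagonal_sum_asymptotic
    (F : Type*) [Field F] [Fintype F] (q : ℕ) (hq : Fintype.card F = q) :
    ∃ C : ℝ, ∀ 𝔇 : ℕ, 1 ≤ 𝔇 →
      |(∑ᶠ t ∈ {t : Polynomial F × Polynomial F × Polynomial F × Polynomial F |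
            t.1.Monic ∧ t.2.1.Monic ∧ t.2.2.1.Monic ∧ t.2.2.2.Monic ∧
            (t.1 * t.2.1).natDegree < 𝔇 ∧ (t.2.2.1 * t.2.2.2).natDegree < 𝔇 ∧
            t.1 * t.2.2.1 = t.2.1 * t.2.2.2},
          (Real.sqrt ((q : ℝ) ^ (t.1 * t.2.1 * t.2.2.1 * t.2.2.2).natDegree))⁻¹) -
        ((q : ℝ) - 1) / (48 * q) * (𝔇 : ℝ) ^ 4| ≤ C * (𝔇 : ℝ) ^ 3 := by
  subst hq
  refine ⟨2, fun 𝔇 _ => ?_⟩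
  have hinj : Set.InjOn quadrupleOf (params F 𝔇 : Set (F[X] × (F[X] × F[X]) × F[X])) :=
    injOn_quadrupleOf.mono fun x hx => (mem_params.1 (mem_coe.1 hx)).1
  change |∑ᶠ t ∈ _, weight (Fintype.card F : ℝ) t - _| ≤ _
  rw [setOf_eq_image_params, finsum_mem_image hinj, finsum_mem_coe_finset, sum_weight_params]
  simp only [card_coprimePairs_div_pow]
  exact abs_sum_degreeTuples_sub_le _ (by exact_mod_cast Fintype.card_pos) 𝔇
end

section
/- For positive integers 𝔇 ≥ 3, Σ |ABCD|^{−1/2} ≤ ((q−1)/(2q))·𝔇³ + O(𝔇²), where the sum is over quadruples (A,B,C,D) of monic polynomials in F_q[x] satisfying 𝔇−3 ≤ deg(AB) ≤ 𝔇, deg(CD) ≤ 𝔇 and AC = BD, and the implied constant depends only on q. -/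
/-!
Every monic solution of `AC = BD` factors as `(GA', GB', B'H, A'H)` with `G, A', B', H` monic,
and then `deg(ABCD) = 2(g + a + b + h)` in terms of their degrees. As there are `q^n` monic
polynomials of degree `n`, each degree tuple `(a, b, g, h)` contributes at most
`q^(g+a+b+h) · q^-(g+a+b+h) = 1` to the sum. The constraints force `2g` into
`[𝔇 - 3 - a - b, 𝔇 - a - b]` (at most two values of `g`) and `2h ≤ 𝔇 - a - b`, so there
are at most `∑_{s ≤ 𝔇} (s + 1)(𝔇 + 2 - s) = (𝔇 + 1)(𝔇 + 2)(𝔇 + 6)/6 = 𝔇³/6 + O(𝔇²)`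
tuples, and `1/6 ≤ (q - 1)/(2q)` because `q ≥ 2`.
-/

open Polynomial Finset

noncomputable section

theorem exists_mul_eq_of_mul_eq_mul {α : Type*} [CommMonoidWithZero α] [IsCancelMulZero α]
    [DecompositionMonoid α] {a b c d : α} (ha : a ≠ 0) (h : a * c = b * d) :
    ∃ g a' b' e, a = g * a' ∧ b = g * b' ∧ c = b' * e ∧ d = a' * e := by
  obtain ⟨g, a', ⟨b', rfl⟩, ⟨e, rfl⟩, rfl⟩ := exists_dvd_and_dvd_of_dvd_mul (Dvd.intro c h)
  refine ⟨g, a', b', e, rfl, rfl, mul_left_cancel₀ ha ?_, rfl⟩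
  rw [h]
  ac_rfl

theorem finsum_mem_le_sum_of_subset {α M : Type*} [AddCommMonoid M] [PartialOrder M]
    [IsOrderedAddMonoid M] {s : Set α} {t : Finset α} {f : α → M}
    (hf : ∀ x, 0 ≤ f x) (h : s ⊆ t) : ∑ᶠ x ∈ s, f x ≤ ∑ x ∈ t, f x := by
  rw [finsum_mem_eq_finite_toFinset_sum f (t.finite_toSet.subset h)]
  exact sum_le_sum_of_subset_of_nonneg (by simpa using h) fun x _ _ => hf x

theorem sum_range_add_one_mul_sub (m : ℝ) (n : ℕ) :
    ∑ s ∈ range n, ((s : ℝ) + 1) * (m - s) = m * n * (n + 1) / 2 - (n - 1) * n * (n + 1) / 3 := by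
  induction n with
  | zero => simp
  | succ n ih =>
    rw [sum_range_succ, ih]
    push_cast
    ring

/-- Contains `((a, b), (g, h))` whenever `𝔇 - 3 ≤ 2g + a + b ≤ 𝔇` and `a + b + 2h ≤ 𝔇`. -/
def admissibleDegrees (𝔇 : ℕ) : Finset ((ℕ × ℕ) × (ℕ × ℕ)) :=
  (range (𝔇 + 1)).biUnion fun s =>
    antidiagonal s ×ˢ (Icc ((𝔇 - s) / 2 - 1) ((𝔇 - s) / 2) ×ˢ range ((𝔇 - s) / 2 + 1))

theorem card_admissibleDegrees_le (𝔇 : ℕ) :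
    #(admissibleDegrees 𝔇) ≤ ∑ s ∈ range (𝔇 + 1), (s + 1) * (𝔇 + 2 - s) := by
  refine card_biUnion_le.trans (sum_le_sum fun s hs => ?_)
  have := mem_range.1 hs
  rw [card_product, card_product, Nat.card_antidiagonal, Nat.card_Icc, card_range]
  exact Nat.mul_le_mul_left _ ((Nat.mul_le_mul_right _ (by omega : _ ≤ 2)).trans (by omega))

theorem card_admissibleDegrees_le_cube {𝔇 : ℕ} (h𝔇 : 3 ≤ 𝔇) :
    (#(admissibleDegrees 𝔇) : ℝ) ≤ 1 / 6 * 𝔇 ^ 3 + 3 * 𝔇 ^ 2 := by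
  have hsum : ((∑ s ∈ range (𝔇 + 1), (s + 1) * (𝔇 + 2 - s) : ℕ) : ℝ) =
      ∑ s ∈ range (𝔇 + 1), ((s : ℝ) + 1) * ((𝔇 + 2 : ℝ) - s) := by
    push_cast
    refine sum_congr rfl fun s hs => ?_
    rw [Nat.cast_sub (by have := mem_range.1 hs; omega)]
    push_cast
    ring
  have h3 : (3 : ℝ) ≤ 𝔇 := by exact_mod_cast h𝔇
  calc (#(admissibleDegrees 𝔇) : ℝ)
      ≤ ∑ s ∈ range (𝔇 + 1), ((s : ℝ) + 1) * ((𝔇 + 2 : ℝ) - s) := by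
        rw [← hsum]
        exact_mod_cast card_admissibleDegrees_le 𝔇
    _ = (𝔇 + 1) * (𝔇 + 2) * (𝔇 + 6) / 6 := by
        rw [sum_range_add_one_mul_sub]
        push_cast
        ring
    _ ≤ 1 / 6 * 𝔇 ^ 3 + 3 * 𝔇 ^ 2 := by nlinarith

namespace Polynomial

section Semiring

variable {R : Type*} [Semiring R]

def quadOfFactors (x : (R[X] × R[X]) × (R[X] × R[X])) : R[X] × R[X] × R[X] × R[X] :=
  (x.2.1 * x.1.1, x.2.1 * x.1.2, x.1.2 * x.2.2, x.1.1 * x.2.2)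

def diagonalWeight (q : ℕ) (t : R[X] × R[X] × R[X] × R[X]) : ℝ :=
  (Real.sqrt ((q : ℝ) ^ (t.1 * t.2.1 * t.2.2.1 * t.2.2.2).natDegree))⁻¹

end Semiring

variable {K : Type*} [Field K]

theorem exists_monic_mul_eq_of_mul_eq_mul {A B C D : K[X]} (hA : A.Monic) (hB : B.Monic)
    (hC : C.Monic) (hD : D.Monic) (h : A * C = B * D) :
    ∃ G A' B' H : K[X], G.Monic ∧ A'.Monic ∧ B'.Monic ∧ H.Monic ∧
      A = G * A' ∧ B = G * B' ∧ C = B' * H ∧ D = A' * H := by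
  classical
  obtain ⟨G, A', B', H, rfl, rfl, rfl, rfl⟩ := exists_mul_eq_of_mul_eq_mul hA.ne_zero h
  refine ⟨normalize G, normalize A', normalize B', normalize H,
    monic_normalize (left_ne_zero_of_mul hA.ne_zero),
    monic_normalize (right_ne_zero_of_mul hA.ne_zero),
    monic_normalize (right_ne_zero_of_mul hB.ne_zero),
    monic_normalize (right_ne_zero_of_mul hC.ne_zero), ?_, ?_, ?_, ?_⟩ <;>
  rw [← normalize_mul, Monic.normalize_eq_self ‹_›]

variable [Fintype K]

theorem finite_setOf_monic_natDegree (n : ℕ) : {p : K[X] | p.Monic ∧ p.natDegree = n}.Finite :=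
  Finite.of_equiv _ ((monicEquivDegreeLT n).trans (degreeLTEquiv K n).toEquiv).symm

variable (K) in
def monicOfNatDegree (n : ℕ) : Finset K[X] :=
  (finite_setOf_monic_natDegree n).toFinset

theorem mem_monicOfNatDegree {n : ℕ} {p : K[X]} :
    p ∈ monicOfNatDegree K n ↔ p.Monic ∧ p.natDegree = n :=
  Set.Finite.mem_toFinset _

theorem card_monicOfNatDegree (n : ℕ) : #(monicOfNatDegree K n) = Fintype.card K ^ n := by
  rw [monicOfNatDegree, ← Nat.card_eq_card_finite_toFinset]
  exact (Nat.card_congr ((monicEquivDegreeLT n).trans (degreeLTEquiv K n).toEquiv)).trans (by simp)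

variable (K) in
def monicBox (n : (ℕ × ℕ) × (ℕ × ℕ)) : Finset ((K[X] × K[X]) × (K[X] × K[X])) :=
  (monicOfNatDegree K n.1.1 ×ˢ monicOfNatDegree K n.1.2) ×ˢ
    (monicOfNatDegree K n.2.1 ×ˢ monicOfNatDegree K n.2.2)

theorem card_monicBox (n : (ℕ × ℕ) × (ℕ × ℕ)) :
    #(monicBox K n) = Fintype.card K ^ (n.1.1 + n.1.2 + n.2.1 + n.2.2) := by
  simp only [monicBox, card_product, card_monicOfNatDegree, pow_add, mul_assoc]

theorem diagonalWeight_quadOfFactors {n : (ℕ × ℕ) × (ℕ × ℕ)} {x} (hx : x ∈ monicBox K n) :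
    diagonalWeight (Fintype.card K) (quadOfFactors x) =
      ((Fintype.card K : ℝ) ^ (n.1.1 + n.1.2 + n.2.1 + n.2.2))⁻¹ := by
  obtain ⟨⟨a, b⟩, g, h⟩ := n
  obtain ⟨⟨A, B⟩, G, H⟩ := x
  obtain ⟨⟨⟨hA, rfl⟩, ⟨hB, rfl⟩⟩, ⟨hG, rfl⟩, ⟨hH, rfl⟩⟩ := by
    simpa only [monicBox, mem_product, mem_monicOfNatDegree] using hx
  have hdeg : (G * A * (G * B) * (B * H) * (A * H)).natDegree =
      2 * (A.natDegree + B.natDegree + G.natDegree + H.natDegree) := by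
    simp only [natDegree_mul, ne_eq, mul_eq_zero, hA.ne_zero, hB.ne_zero, hG.ne_zero, hH.ne_zero,
      or_self, not_false_eq_true]
    ring
  rw [diagonalWeight, quadOfFactors, hdeg, pow_mul', Real.sqrt_sq (by positivity)]

theorem sum_diagonalWeight_monicBox (n : (ℕ × ℕ) × (ℕ × ℕ)) :
    ∑ x ∈ monicBox K n, diagonalWeight (Fintype.card K) (quadOfFactors x) = 1 := by
  rw [sum_congr rfl fun x hx => diagonalWeight_quadOfFactors hx, sum_const, card_monicBox,
    nsmul_eq_mul]
  push_cast
  exact mul_inv_cancel₀ (pow_ne_zero _ (Nat.cast_ne_zero.2 Fintype.card_ne_zero))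

open scoped Classical in
variable (K) in
def diagonalCover (𝔇 : ℕ) : Finset (K[X] × K[X] × K[X] × K[X]) :=
  ((admissibleDegrees 𝔇).sigma (monicBox K)).image fun x => quadOfFactors x.2

theorem mem_diagonalCover {𝔇 : ℕ} {A B C D : K[X]} (hA : A.Monic) (hB : B.Monic) (hC : C.Monic)
    (hD : D.Monic) (hAB : 𝔇 - 3 ≤ (A * B).natDegree) (hAB' : (A * B).natDegree ≤ 𝔇)
    (hCD : (C * D).natDegree ≤ 𝔇) (h : A * C = B * D) : (A, B, C, D) ∈ diagonalCover K 𝔇 := by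
  classical
  obtain ⟨G, A', B', H, hG, hA', hB', hH, rfl, rfl, rfl, rfl⟩ :=
    exists_monic_mul_eq_of_mul_eq_mul hA hB hC hD h
  simp only [natDegree_mul, ne_eq, mul_eq_zero, hA'.ne_zero, hB'.ne_zero, hG.ne_zero, hH.ne_zero,
    or_self, not_false_eq_true] at hAB hAB' hCD
  refine mem_image.2 ⟨Sigma.mk (β := fun _ => _)
    ((A'.natDegree, B'.natDegree), (G.natDegree, H.natDegree)) ((A', B'), (G, H)),
    mem_sigma.2 ⟨?_, ?_⟩, rfl⟩
  · refine mem_biUnion.2 ⟨A'.natDegree + B'.natDegree, mem_range.2 (by omega), ?_⟩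
    simp only [mem_product, HasAntidiagonal.mem_antidiagonal, mem_Icc, mem_range, true_and]
    omega
  · simp [monicBox, mem_monicOfNatDegree, hA', hB', hG, hH]

theorem sum_diagonalWeight_diagonalCover_le (𝔇 : ℕ) :
    ∑ t ∈ diagonalCover K 𝔇, diagonalWeight (Fintype.card K) t ≤ #(admissibleDegrees 𝔇) := by
  classical
  calc _ ≤ ∑ x ∈ (admissibleDegrees 𝔇).sigma (monicBox K),
          diagonalWeight (Fintype.card K) (quadOfFactors x.2) :=
        sum_image_le_of_nonneg fun _ _ => by unfold diagonalWeight; positivity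
    _ = #(admissibleDegrees 𝔇) := by simp [sum_sigma, sum_diagonalWeight_monicBox]

end Polynomial

/-- Truncated diagonal sum: `Σ |ABCD|^{-1/2} ≤ ((q-1)/(2q)) 𝔇³ + O(𝔇²)` over quadruples
of monic polynomials with `𝔇-3 ≤ deg(AB) ≤ 𝔇`, `deg(CD) ≤ 𝔇` and `AC = BD`, the implied
constant depending only on `q`. -/
theorem diagonal_sum_upper_bound
    (F : Type*) [Field F] [Fintype F] (q : ℕ) (hq : Fintype.card F = q) :
    ∃ C : ℝ, ∀ 𝔇 : ℕ, 3 ≤ 𝔇 →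
      (∑ᶠ t ∈ {t : Polynomial F × Polynomial F × Polynomial F × Polynomial F |
            t.1.Monic ∧ t.2.1.Monic ∧ t.2.2.1.Monic ∧ t.2.2.2.Monic ∧
            𝔇 - 3 ≤ (t.1 * t.2.1).natDegree ∧ (t.1 * t.2.1).natDegree ≤ 𝔇 ∧
            (t.2.2.1 * t.2.2.2).natDegree ≤ 𝔇 ∧
            t.1 * t.2.2.1 = t.2.1 * t.2.2.2},
          (Real.sqrt ((q : ℝ) ^ (t.1 * t.2.1 * t.2.2.1 * t.2.2.2).natDegree))⁻¹) ≤
        ((q : ℝ) - 1) / (2 * q) * (𝔇 : ℝ) ^ 3 + C * (𝔇 : ℝ) ^ 2 := by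
  subst hq
  refine ⟨3, fun 𝔇 h𝔇 => ?_⟩
  have hcoeff : (1 / 6 : ℝ) ≤ (Fintype.card F - 1) / (2 * Fintype.card F) := by
    have : (2 : ℝ) ≤ Fintype.card F := by exact_mod_cast Fintype.one_lt_card (α := F)
    rw [div_le_div_iff₀ (by norm_num) (by positivity)]
    linarith
  calc _ ≤ ∑ t ∈ diagonalCover F 𝔇, diagonalWeight (Fintype.card F) t := by
        refine finsum_mem_le_sum_of_subset (fun t => by positivity) ?_
        rintro ⟨A, B, C, D⟩ ⟨hA, hB, hC, hD, hAB, hAB', hCD, h⟩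
        exact mem_diagonalCover hA hB hC hD hAB hAB' hCD h
    _ ≤ #(admissibleDegrees 𝔇) := sum_diagonalWeight_diagonalCover_le 𝔇
    _ ≤ 1 / 6 * (𝔇 : ℝ) ^ 3 + 3 * (𝔇 : ℝ) ^ 2 := card_admissibleDegrees_le_cube h𝔇
    _ ≤ _ := by gcongr
end
end
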